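/- arXiv:1502.02691 — 5 statements merged into one kernel-verified Lean document; each statement's English description precedes it below -/
import Mathlib

section
/- Every regular flow on a compact metric space admits a field of cross sections. -/
open Set Metric Filter Topology

universe u

def IsFlow {X : Type u} [TopologicalSpace X] (φ : ℝ → X → X) : Prop :=
  Continuous (fun p : ℝ × X => φ p.1 p.2) ∧ (∀ x, φ 0 x = x) ∧
    ∀ (s t : ℝ) (x : X), φ (s + t) x = φ s (φ t x)

def IsRegularFlow {X : Type u} [TopologicalSpace X] (φ : ℝ → X → X) : Prop :=
  IsFlow φ ∧ ∀ x : X, ∃ t : ℝ, φ t x ≠ x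

/-- `B_r(K)`, the closed `r`-neighborhood of a set `K`. -/
def ballSet {X : Type u} [PseudoMetricSpace X] (r : ℝ) (K : Set X) : Set X :=
  ⋃ z ∈ K, closedBall z r

/-- A field of compact sets: compact values, `x ∈ h x`, and semicontinuity. -/
def IsFieldOfCompactSets {X : Type u} [MetricSpace X] (h : X → Set X) : Prop :=
  (∀ x : X, IsCompact (h x)) ∧ (∀ x : X, x ∈ h x) ∧
    ∀ x : X, ∀ ε > (0 : ℝ), ∃ δ > (0 : ℝ), ∀ y : X, dist x y < δ → h y ⊆ ballSet ε (h x)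

def IsFieldOfNbhds {X : Type u} [MetricSpace X] (N : X → Set X) : Prop :=
  IsFieldOfCompactSets N ∧ ∃ r > (0 : ℝ), ∀ x : X, closedBall x r ⊆ N x

/-- `φ_I(h)`, the saturation of a field `h` by flow-times in `I`. -/
def flowSat {X : Type u} [TopologicalSpace X] (φ : ℝ → X → X) (I : Set ℝ) (h : X → Set X) :
    X → Set X :=
  fun x => {z | ∃ t ∈ I, ∃ y ∈ h x, z = φ t y}

def IsCrossSectionField {X : Type u} [MetricSpace X] (φ : ℝ → X → X) (H : X → Set X) : Prop :=
  IsFieldOfCompactSets H ∧ ∃ τ > (0 : ℝ),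
    IsFieldOfNbhds (flowSat φ (Icc (-τ) τ) H) ∧
    ∀ x : X, ∀ y ∈ H x, H x ∩ {z | ∃ t : ℝ, |t| ≤ τ ∧ z = φ t y} = {y}

def IsMonotonousField {X : Type u} [MetricSpace X] (φ : ℝ → X → X) (H : X → Set X) : Prop :=
  ∃ ε > (0 : ℝ), ∀ x : X, ∀ t ∈ Ioo (0 : ℝ) ε, H x ∩ H (φ t x) = ∅

def fieldTranspose {X : Type u} (h : X → Set X) : X → Set X := fun x => {y | x ∈ h y}

def IsSymmetricField {X : Type u} (h : X → Set X) : Prop := fieldTranspose h = h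

def IsLocallySymmetricField {X : Type u} [MetricSpace X] (h : X → Set X) : Prop :=
  ∃ δ > (0 : ℝ), IsSymmetricField (fun x => closedBall x δ ∩ h x)

/-- Continuity of a field with respect to the Hausdorff metric. -/
def IsContinuousField {X : Type u} [MetricSpace X] (h : X → Set X) : Prop :=
  ∀ x : X, ∀ ε > (0 : ℝ), ∃ δ > (0 : ℝ), ∀ y : X,
    dist x y < δ → hausdorffDist (h x) (h y) < ε

def IsExpansiveFlow {X : Type u} [MetricSpace X] (φ : ℝ → X → X) : Prop :=
  ∀ ε > (0 : ℝ), ∃ δ > (0 : ℝ), ∀ x y : X, ∀ h : ℝ → ℝ,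
    Continuous h → StrictMono h → Function.Surjective h → h 0 = 0 →
    (∀ t : ℝ, dist (φ (h t) y) (φ t x) < δ) → ∃ t ∈ Ioo (-ε) ε, y = φ t x

def IsPositiveExpansiveFlow {X : Type u} [MetricSpace X] (φ : ℝ → X → X) : Prop :=
  ∀ ε > (0 : ℝ), ∃ δ > (0 : ℝ), ∀ x y : X, ∀ h : ℝ → ℝ,
    ContinuousOn h (Ici 0) → StrictMonoOn h (Ici 0) → h 0 = 0 →
    MapsTo h (Ici 0) (Ici 0) → SurjOn h (Ici 0) (Ici 0) →
    (∀ t ≥ (0 : ℝ), dist (φ (h t) y) (φ t x) < δ) → ∃ t ∈ Ioo (-ε) ε, y = φ t x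

/-- A one-parameter family of cross sections as produced by Theorem `secContMonSym`
of the paper: jointly continuous (Hausdorff metric), with nonempty compact
connected values; each `H ε` (for `ε ∈ (0,r]`) is a continuous, monotonous,
locally symmetric field of cross sections; `H 0 x = {x}`; monotone in `ε`. -/
structure CrossSectionFamily {X : Type u} [MetricSpace X] (φ : ℝ → X → X) where
  r : ℝ
  r_pos : 0 < r
  H : ℝ → X → Set X
  compact : ∀ ε ∈ Icc (0 : ℝ) r, ∀ x : X, IsCompact (H ε x)
  connected : ∀ ε ∈ Icc (0 : ℝ) r, ∀ x : X, IsConnected (H ε x)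
  jointCont : ∀ ε ∈ Icc (0 : ℝ) r, ∀ x : X, ∀ η > (0 : ℝ), ∃ δ > (0 : ℝ),
    ∀ ε' ∈ Icc (0 : ℝ) r, ∀ y : X, |ε - ε'| < δ → dist x y < δ →
      hausdorffDist (H ε x) (H ε' y) < η
  cross : ∀ ε ∈ Ioc (0 : ℝ) r, IsCrossSectionField φ (H ε)
  monot : ∀ ε ∈ Ioc (0 : ℝ) r, IsMonotonousField φ (H ε)
  contField : ∀ ε ∈ Ioc (0 : ℝ) r, IsContinuousField (H ε)
  locSym : ∀ ε ∈ Ioc (0 : ℝ) r, IsLocallySymmetricField (H ε)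
  zero : ∀ x : X, H 0 x = {x}
  mono : ∀ ε ε' : ℝ, 0 ≤ ε → ε ≤ ε' → ε' ≤ r → ∀ x : X, H ε x ⊆ H ε' x

/-- The stable set `W^s` of `x` relative to a field of cross sections `Hε`. -/
def Wstable {X : Type u} [MetricSpace X] (φ : ℝ → X → X) (Hε : X → Set X) (x : X) : Set X :=
  {y | ∃ h : ℝ → ℝ, ContinuousOn h (Ici 0) ∧ StrictMonoOn h (Ici 0) ∧ h 0 = 0 ∧
    MapsTo h (Ici 0) (Ici 0) ∧ SurjOn h (Ici 0) (Ici 0) ∧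
    ∀ t ≥ (0 : ℝ), φ (h t) y ∈ Hε (φ t x)}

/-- The unstable set `W^u` of `x` relative to a field of cross sections `Hε`. -/
def Wunstable {X : Type u} [MetricSpace X] (φ : ℝ → X → X) (Hε : X → Set X) (x : X) : Set X :=
  {y | ∃ h : ℝ → ℝ, ContinuousOn h (Iic 0) ∧ StrictMonoOn h (Iic 0) ∧ h 0 = 0 ∧
    MapsTo h (Iic 0) (Iic 0) ∧ SurjOn h (Iic 0) (Iic 0) ∧
    ∀ t ≤ (0 : ℝ), φ (h t) y ∈ Hε (φ t x)}

def IsStablePoint {X : Type u} [MetricSpace X] (φ : ℝ → X → X) (F : CrossSectionFamily φ)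
    (x : X) : Prop :=
  ∀ ε ∈ Ioc (0 : ℝ) F.r, ∃ δ ∈ Ioc (0 : ℝ) F.r, F.H δ x ⊆ Wstable φ (F.H ε) x

/-- `Φ_t(x,S)`: the image of `S` under the sectional flow over `x` at time `t ≥ 0`. -/
def secImage {X : Type u} [MetricSpace X] (φ : ℝ → X → X) (Hd : X → Set X) (x : X)
    (S : Set X) (t : ℝ) : Set X :=
  {z | ∃ y ∈ S, ∃ g : ℝ → ℝ, ContinuousOn g (Ici 0) ∧ g 0 = 0 ∧
    (∀ s ≥ (0 : ℝ), φ (g s) y ∈ Hd (φ s x)) ∧ z = φ (g t) y}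

/-- `Φ_t(x,C)` for the sectional flow defined on the time interval `[0,s]`. -/
def secImageOn {X : Type u} [MetricSpace X] (φ : ℝ → X → X) (Hd : X → Set X) (x : X)
    (C : Set X) (s t : ℝ) : Set X :=
  {z | ∃ y ∈ C, ∃ g : ℝ → ℝ, ContinuousOn g (Icc 0 s) ∧ g 0 = 0 ∧
    (∀ u ∈ Icc (0 : ℝ) s, φ (g u) y ∈ Hd (φ u x)) ∧ z = φ (g t) y}

def IsOneParamNbhdField {X : Type u} [MetricSpace X] (N : ℝ → X → Set X) : Prop :=
  (∀ p ∈ Icc (0 : ℝ) 1, ∀ x : X, IsCompact (N p x) ∧ (N p x).Nonempty) ∧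
  (∀ p ∈ Icc (0 : ℝ) 1, ∀ x : X, ∀ η > (0 : ℝ), ∃ δ > (0 : ℝ), ∀ q ∈ Icc (0 : ℝ) 1, ∀ y : X,
      |p - q| < δ → dist x y < δ → hausdorffDist (N p x) (N q y) < η) ∧
  (∀ p ∈ Ioc (0 : ℝ) 1, IsFieldOfNbhds (N p)) ∧
  (∀ x : X, N 0 x = {x}) ∧ (∀ x : X, N 1 x = univ)

/-- `ℤ`-iterates of a homeomorphism. -/
def homeoIter {X : Type u} [TopologicalSpace X] (f : X ≃ₜ X) : ℤ → X → X
  | Int.ofNat n => (⇑f)^[n]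
  | Int.negSucc n => (⇑f.symm)^[n + 1]

def IsExpansiveHomeo {X : Type u} [MetricSpace X] (f : X ≃ₜ X) : Prop :=
  ∃ c > (0 : ℝ), ∀ x y : X, (∀ n : ℤ, dist (homeoIter f n x) (homeoIter f n y) ≤ c) → x = y


/-!
Whitney's construction. A limit of points whose periods tend to `0` would be a fixed point, so
there is a time `l` with `d(φ_l x, x) ≥ c > 0` for all `x`. Put
`V x y = ∫₀ˡ (d(φ_s y, x) - d(φ_s y, φ_l x)) ds`. Then `V x (φ_t y) - V x (φ_{t'} y) = ∫_{t'}^t g`,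
where `g(s) = d(φ_{s+l} y, x) - d(φ_{s+l} y, φ_l x) - d(φ_s y, x) + d(φ_s y, φ_l x)` equals
`2 d(φ_l x, x) ≥ 2c` at `s = 0`, `y = x`; by uniform continuity `V x` increases at rate `c` along
short orbit segments through points near `x`. Hence the level set of `V x` through `x`, cut down
to a small ball, meets each short orbit segment through it only once, and by the intermediate
value theorem every orbit segment starting near `x` crosses it.
-/

open intervalIntegral

theorem IsCompact.exists_forall_dist_lt_of_continuous {α β : Type*} [PseudoMetricSpace α]
    [PseudoMetricSpace β] {K : Set α} (hK : IsCompact K) {f : α → β} (hf : Continuous f)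
    {ε : ℝ} (hε : 0 < ε) : ∃ δ > 0, ∀ p ∈ K, ∀ q, dist q p < δ → dist (f q) (f p) < ε := by
  obtain ⟨δ, hδ, hnear⟩ := mem_uniformity_dist.1 <|
    hK.uniformContinuousAt_of_continuousAt f (fun p _ => hf.continuousAt) (dist_mem_uniformity hε)
  refine ⟨δ, hδ, fun p hp q hq => ?_⟩
  rw [dist_comm]
  exact hnear (by rwa [dist_comm]) hp

theorem tendsto_floor_div_mul {ι : Type*} {L : Filter ι} {p : ι → ℝ} (hp : ∀ i, 0 < p i)
    (hp0 : Tendsto p L (𝓝 0)) (t : ℝ) : Tendsto (fun i => (⌊t / p i⌋ : ℝ) * p i) L (𝓝 t) := by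
  have hdist : ∀ i, dist ((⌊t / p i⌋ : ℝ) * p i) t ≤ p i := by
    intro i
    have hfract : t - ⌊t / p i⌋ * p i = p i * Int.fract (t / p i) := by
      have := (hp i).ne'
      rw [Int.fract]
      field_simp
    rw [dist_comm, Real.dist_eq, hfract, abs_of_nonneg (mul_nonneg (hp i).le (Int.fract_nonneg _))]
    exact mul_le_of_le_one_right (hp i).le (Int.fract_lt_one _).le
  exact tendsto_iff_dist_tendsto_zero.2 (squeeze_zero (fun _ => dist_nonneg) hdist hp0)

theorem integral_add_mul_le_integral_shift {F : ℝ → ℝ} (hF : Continuous F) {c l t' t : ℝ}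
    (htt : t' ≤ t) (hgrow : ∀ s ∈ Icc t' t, c ≤ F (s + l) - F s) :
    (∫ s in t'..t' + l, F s) + c * (t - t') ≤ ∫ s in t..t + l, F s := by
  have hdiff : (∫ s in t..t + l, F s) - ∫ s in t'..t' + l, F s
      = ∫ s in t'..t, (F (s + l) - F s) := by
    rw [integral_interval_sub_interval_comm' (hF.intervalIntegrable _ _)
      (hF.intervalIntegrable _ _) (hF.intervalIntegrable _ _),
      integral_sub (f := fun s => F (s + l))
        ((hF.comp (continuous_add_const l)).intervalIntegrable _ _) (hF.intervalIntegrable _ _),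
      integral_comp_add_right F l]
  have hmono : ∫ _ in t'..t, c ≤ ∫ s in t'..t, (F (s + l) - F s) :=
    integral_mono_on htt intervalIntegrable_const
      (((hF.comp (continuous_add_const l)).sub hF).intervalIntegrable _ _) hgrow
  rw [intervalIntegral.integral_const, smul_eq_mul] at hmono
  linarith

section CompactSpace

variable {X : Type u} [MetricSpace X] [CompactSpace X]

theorem isFieldOfCompactSets_of_isClosed_graph {h : X → Set X}
    (hgraph : IsClosed {p : X × X | p.2 ∈ h p.1}) (hmem : ∀ x, x ∈ h x) :
    IsFieldOfCompactSets h := by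
  refine ⟨fun x => (hgraph.preimage (Continuous.prodMk_right x)).isCompact, hmem,
    fun x ε hε => ?_⟩
  -- the base points of graph points far from `h x` form a compact set missing `x`
  set C := {p : X × X | p.2 ∈ h p.1} ∩ Prod.snd ⁻¹' (thickening ε (h x))ᶜ
  have hCx : x ∉ Prod.fst '' C := fun ⟨p, hp, hpx⟩ =>
    hp.2 (self_subset_thickening hε _ (hpx ▸ hp.1))
  have hC : IsClosed (Prod.fst '' C) :=
    ((hgraph.inter (isOpen_thickening.isClosed_compl.preimage continuous_snd)).isCompact.image
      continuous_fst).isClosed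
  obtain ⟨δ, hδ, hball⟩ := Metric.isOpen_iff.1 hC.isOpen_compl x hCx
  refine ⟨δ, hδ, fun y hxy z hz => ?_⟩
  have hzε : z ∈ thickening ε (h x) := by
    by_contra hzε
    exact hball (mem_ball.2 (by rwa [dist_comm])) ⟨(y, z), ⟨hz, hzε⟩, rfl⟩
  obtain ⟨w, hw, hzw⟩ := mem_thickening_iff.1 hzε
  exact mem_biUnion hw (mem_closedBall.2 hzw.le)

end CompactSpace

namespace IsFlow

variable {X : Type u} {φ : ℝ → X → X}

section Topological

variable [TopologicalSpace X] (hφ : IsFlow φ)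
include hφ

theorem continuous_orbit (y : X) : Continuous fun t => φ t y :=
  hφ.1.comp (continuous_id.prodMk continuous_const)

theorem continuous_apply (t : ℝ) : Continuous (φ t) :=
  hφ.1.comp (continuous_const.prodMk continuous_id)

theorem apply_neg_apply (t : ℝ) (x : X) : φ (-t) (φ t x) = x := by
  rw [← hφ.2.2, neg_add_cancel, hφ.2.1]

theorem apply_nat_mul_eq_self {p : ℝ} {y : X} (hp : φ p y = y) (n : ℕ) :
    φ (n * p) y = y := by
  induction n with
  | zero => simpa using hφ.2.1 y
  | succ n ih => rw [Nat.cast_succ, add_one_mul, add_comm, hφ.2.2, ih, hp]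

theorem apply_int_mul_eq_self {p : ℝ} {y : X} (hp : φ p y = y) (k : ℤ) :
    φ (k * p) y = y := by
  obtain ⟨n, rfl | rfl⟩ := k.eq_nat_or_neg
  · exact_mod_cast hφ.apply_nat_mul_eq_self hp n
  · have hneg : φ (-p) y = y := by
      conv_lhs => rw [← hp]
      exact hφ.apply_neg_apply p y
    simpa [neg_mul_comm] using hφ.apply_nat_mul_eq_self hneg n

theorem isClosed_graph_flowSat [CompactSpace X] [T2Space X] {I : Set ℝ} (hI : IsCompact I)
    {h : X → Set X} (hgraph : IsClosed {p : X × X | p.2 ∈ h p.1}) :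
    IsClosed {p : X × X | p.2 ∈ flowSat φ I h p.1} := by
  have himage : {p : X × X | p.2 ∈ flowSat φ I h p.1}
      = (fun q : ℝ × X × X => (q.2.1, φ q.1 q.2.2)) '' (I ×ˢ {p | p.2 ∈ h p.1}) := by
    ext ⟨x, z⟩
    constructor
    · rintro ⟨t, ht, y, hy, rfl⟩
      exact ⟨(t, x, y), ⟨ht, hy⟩, rfl⟩
    · rintro ⟨⟨t, x', y⟩, ⟨ht, hy⟩, hxz⟩
      cases hxz
      exact ⟨t, ht, y, hy, rfl⟩
  rw [himage]
  exact ((hI.prod hgraph.isCompact).image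
    (continuous_snd.fst.prodMk (hφ.1.comp (continuous_fst.prodMk continuous_snd.snd)))).isClosed

end Topological

section Metric

variable [MetricSpace X] [CompactSpace X] (hφ : IsFlow φ)
include hφ

theorem exists_pos_forall_dist_apply_le {ε : ℝ} (hε : 0 < ε) :
    ∃ τ > 0, ∀ t z, |t| ≤ τ → dist (φ t z) z ≤ ε := by
  obtain ⟨δ, hδ, hnear⟩ := (isCompact_univ.image (f := fun z : X => ((0 : ℝ), z))
    (by fun_prop)).exists_forall_dist_lt_of_continuous hφ.1 hε
  refine ⟨δ / 2, half_pos hδ, fun t z ht => ?_⟩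
  have hclose : dist (t, z) ((0 : ℝ), z) < δ := by
    rw [Prod.dist_eq, dist_self, Real.dist_eq, sub_zero]
    exact max_lt (by linarith) hδ
  simpa [hφ.2.1] using (hnear _ ⟨z, mem_univ z, rfl⟩ _ hclose).le

end Metric

end IsFlow

theorem IsRegularFlow.exists_pos_forall_apply_ne {X : Type u} [MetricSpace X] [CompactSpace X]
    {φ : ℝ → X → X} (hφ : IsRegularFlow φ) : ∃ l > 0, ∀ x, φ l x ≠ x := by
  by_contra! hfix
  choose x hx using fun n : ℕ => hfix (1 / (n + 1)) Nat.one_div_pos_of_nat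
  obtain ⟨x₀, -, σ, hσ, hlim⟩ := isCompact_univ.tendsto_subseq (fun n => mem_univ (x n))
  obtain ⟨t, ht⟩ := hφ.2 x₀
  have htimes := tendsto_floor_div_mul (fun n => Nat.one_div_pos_of_nat)
    (tendsto_one_div_add_atTop_nhds_zero_nat.comp hσ.tendsto_atTop) t
  refine ht (tendsto_nhds_unique ((hφ.1.1.tendsto (t, x₀)).comp (htimes.prodMk_nhds hlim)) ?_)
  exact hlim.congr fun n => (hφ.1.apply_int_mul_eq_self (hx (σ n)) _).symm

section LevelSets

variable {X : Type u} [MetricSpace X] {φ : ℝ → X → X}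

def IncreasesAlongFlow (φ : ℝ → X → X) (V : X → X → ℝ) (c ρ : ℝ) : Prop :=
  ∀ x y, dist y x ≤ ρ → ∀ t' t, -ρ ≤ t' → t' ≤ t → t ≤ ρ → V x (φ t' y) + c * (t - t') ≤ V x (φ t y)

def localLevelSet (V : X → X → ℝ) (ρ : ℝ) (x : X) : Set X :=
  {y | dist y x ≤ ρ ∧ V x y = V x x}

variable {V : X → X → ℝ} {c ρ : ℝ}

theorem isClosed_graph_localLevelSet (hV : Continuous (Function.uncurry V)) :
    IsClosed {p : X × X | p.2 ∈ localLevelSet V ρ p.1} :=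
  (isClosed_le (continuous_snd.dist continuous_fst) continuous_const).inter
    (isClosed_eq hV (hV.comp (continuous_fst.prodMk continuous_fst)))

namespace IncreasesAlongFlow

variable (hV : IncreasesAlongFlow φ V c ρ) (hc : 0 < c)
include hV hc

theorem strictMonoOn {x y : X} (hxy : dist y x ≤ ρ) :
    StrictMonoOn (fun t => V x (φ t y)) (Icc (-ρ) ρ) := fun t' ht' t ht hlt => by
  have hgain : 0 < c * (t - t') := mul_pos hc (sub_pos.2 hlt)
  linarith [hV x y hxy t' t ht'.1 hlt.le ht.2]

theorem inter_orbitSegment_eq_singleton (hφ : IsFlow φ) {τ : ℝ} (hτ : 0 ≤ τ) (hτρ : τ ≤ ρ)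
    (x : X) :
    ∀ y ∈ localLevelSet V ρ x,
      localLevelSet V ρ x ∩ {z | ∃ t : ℝ, |t| ≤ τ ∧ z = φ t y} = {y} := by
  intro y hy
  have hρ : 0 ≤ ρ := hτ.trans hτρ
  refine Subset.antisymm ?_ (singleton_subset_iff.2 ⟨hy, 0, by simpa using hτ, (hφ.2.1 y).symm⟩)
  rintro _ ⟨hz, t, ht, rfl⟩
  have ht0 : t = 0 := (hV.strictMonoOn hc hy.1).injOn
    ⟨by linarith [neg_abs_le t], by linarith [le_abs_self t]⟩ ⟨by linarith, hρ⟩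
    (by simp only [hφ.2.1, hz.2, hy.2])
  rw [ht0, hφ.2.1, mem_singleton_iff]

theorem exists_closedBall_subset_flowSat [CompactSpace X] (hφ : IsFlow φ)
    (hVc : Continuous (Function.uncurry V)) {τ : ℝ} (hτ : 0 < τ) (hτρ : τ ≤ ρ)
    (hdisp : ∀ t z, |t| ≤ τ → dist (φ t z) z ≤ ρ / 2) :
    ∃ r > 0, ∀ x, closedBall x r ⊆ flowSat φ (Icc (-τ) τ) (localLevelSet V ρ) x := by
  obtain ⟨δ, hδ, hVnear⟩ := (isCompact_univ.image (f := fun x : X => (x, x))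
    (by fun_prop)).exists_forall_dist_lt_of_continuous hVc (mul_pos hc hτ)
  refine ⟨min (ρ / 2) (δ / 2), lt_min (by linarith) (half_pos hδ), fun x z hz => ?_⟩
  have hzρ : dist z x ≤ ρ / 2 := (mem_closedBall.1 hz).trans (min_le_left _ _)
  have hzδ : dist z x < δ := (mem_closedBall.1 hz).trans_lt ((min_le_right _ _).trans_lt
    (half_lt_self hδ))
  have hVz : |V x z - V x x| < c * τ := by
    have hclose : dist (x, z) (x, x) < δ := by
      rw [Prod.dist_eq, dist_self]
      exact max_lt hδ hzδ
    simpa [Real.dist_eq] using hVnear _ ⟨x, mem_univ x, rfl⟩ _ hclose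
  have hup := hV x z (by linarith) 0 τ (by linarith) hτ.le hτρ
  have hdown := hV x z (by linarith) (-τ) 0 (by linarith) (by linarith) (by linarith)
  rw [hφ.2.1] at hup hdown
  obtain ⟨t, ht, hVt⟩ := intermediate_value_Icc (by linarith : -τ ≤ τ)
    (hVc.comp (continuous_const.prodMk (hφ.continuous_orbit z))).continuousOn
    (show V x x ∈ Icc (V x (φ (-τ) z)) (V x (φ τ z)) by
      constructor <;> linarith [abs_lt.1 hVz])
  refine ⟨-t, ⟨neg_le_neg ht.2, by linarith [ht.1]⟩, φ t z, ⟨?_, hVt⟩,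
    (hφ.apply_neg_apply t z).symm⟩
  calc dist (φ t z) x ≤ dist (φ t z) z + dist z x := dist_triangle _ _ _
    _ ≤ ρ / 2 + ρ / 2 := add_le_add (hdisp t z (abs_le.2 ⟨ht.1, ht.2⟩)) hzρ
    _ = ρ := add_halves ρ

theorem isCrossSectionField [CompactSpace X] (hφ : IsFlow φ)
    (hVc : Continuous (Function.uncurry V)) (hρ : 0 < ρ) :
    IsCrossSectionField φ (localLevelSet V ρ) := by
  have hgraph := isClosed_graph_localLevelSet (ρ := ρ) hVc
  have hself : ∀ x, x ∈ localLevelSet V ρ x := fun x => ⟨by simpa using hρ.le, rfl⟩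
  obtain ⟨τ₀, hτ₀, hdisp⟩ := hφ.exists_pos_forall_dist_apply_le (half_pos hρ)
  have hτ : 0 < min τ₀ ρ := lt_min hτ₀ hρ
  obtain ⟨r, hr, hball⟩ := hV.exists_closedBall_subset_flowSat hc hφ hVc hτ (min_le_right _ _)
    fun t z ht => hdisp t z (ht.trans (min_le_left _ _))
  refine ⟨isFieldOfCompactSets_of_isClosed_graph hgraph hself, min τ₀ ρ, hτ,
    ⟨isFieldOfCompactSets_of_isClosed_graph (hφ.isClosed_graph_flowSat isCompact_Icc hgraph)
      fun x => ⟨0, ⟨by linarith, hτ.le⟩, x, hself x, (hφ.2.1 x).symm⟩, r, hr, hball⟩,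
    hV.inter_orbitSegment_eq_singleton hc hφ hτ.le (min_le_right _ _)⟩

end IncreasesAlongFlow

end LevelSets

section Whitney

variable {X : Type u} [MetricSpace X] {φ : ℝ → X → X}

def whitneyKernel (φ : ℝ → X → X) (l : ℝ) (x y : X) (s : ℝ) : ℝ :=
  dist (φ s y) x - dist (φ s y) (φ l x)

noncomputable def whitneyFn (φ : ℝ → X → X) (l : ℝ) (x y : X) : ℝ :=
  ∫ s in (0 : ℝ)..l, whitneyKernel φ l x y s

namespace IsFlow

variable (hφ : IsFlow φ) (l : ℝ)
include hφ

theorem continuous_whitneyKernel :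
    Continuous (Function.uncurry fun (p : X × X) (s : ℝ) => whitneyKernel φ l p.1 p.2 s) := by
  have horbit : Continuous fun q : (X × X) × ℝ => φ q.2 q.1.2 :=
    hφ.1.comp (continuous_snd.prodMk continuous_fst.snd)
  exact (horbit.dist continuous_fst.fst).sub
    (horbit.dist ((hφ.continuous_apply l).comp continuous_fst.fst))

theorem continuous_whitneyFn : Continuous (Function.uncurry (whitneyFn φ l)) :=
  continuous_parametric_intervalIntegral_of_continuous' (hφ.continuous_whitneyKernel l) 0 l

theorem whitneyFn_apply (x y : X) (u : ℝ) :
    whitneyFn φ l x (φ u y) = ∫ s in u..u + l, whitneyKernel φ l x y s := by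
  have hshift : ∀ s, whitneyKernel φ l x (φ u y) s = whitneyKernel φ l x y (s + u) := fun s => by
    simp only [whitneyKernel, hφ.2.2]
  simp only [whitneyFn, hshift, integral_comp_add_right (whitneyKernel φ l x y), zero_add,
    add_comm l u]

theorem whitneyKernel_add_sub_self (x : X) :
    whitneyKernel φ l x x (0 + l) - whitneyKernel φ l x x 0 = 2 * dist (φ l x) x := by
  simp only [whitneyKernel, zero_add, hφ.2.1, dist_self, dist_comm x (φ l x)]
  ring

theorem exists_increasesAlongFlow_whitneyFn [CompactSpace X] (hl : ∀ x, φ l x ≠ x) :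
    ∃ c > 0, ∃ ρ > 0, IncreasesAlongFlow φ (whitneyFn φ l) c ρ := by
  obtain ⟨c, hc, hdisp⟩ := isCompact_univ.exists_forall_le'
    ((hφ.continuous_apply l).dist continuous_id).continuousOn fun x _ => dist_pos.2 (hl x)
  set G : ℝ × X × X → ℝ := fun p =>
    whitneyKernel φ l p.2.1 p.2.2 (p.1 + l) - whitneyKernel φ l p.2.1 p.2.2 p.1
  have hG : Continuous G :=
    ((hφ.continuous_whitneyKernel l).comp
      (f := fun p : ℝ × X × X => ((p.2.1, p.2.2), p.1 + l)) (by fun_prop)).sub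
    ((hφ.continuous_whitneyKernel l).comp (f := fun p : ℝ × X × X => ((p.2.1, p.2.2), p.1))
      (by fun_prop))
  obtain ⟨δ, hδ, hGnear⟩ := (isCompact_univ.image (f := fun x : X => ((0 : ℝ), x, x))
    (by fun_prop)).exists_forall_dist_lt_of_continuous hG hc
  refine ⟨c, hc, δ / 2, half_pos hδ, fun x y hxy t' t ht' htt ht => ?_⟩
  rw [hφ.whitneyFn_apply, hφ.whitneyFn_apply]
  refine integral_add_mul_le_integral_shift (F := whitneyKernel φ l x y)
    ((hφ.continuous_whitneyKernel l).comp (f := fun s => ((x, y), s)) (by fun_prop)) htt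
    fun s hs => ?_
  have hclose : dist (s, x, y) ((0 : ℝ), x, x) < δ := by
    rw [Prod.dist_eq, Prod.dist_eq, dist_self, Real.dist_eq, sub_zero]
    exact max_lt (abs_lt.2 ⟨by linarith [hs.1], by linarith [hs.2]⟩) (max_lt hδ (by linarith))
  have hGs : |G (s, x, y) - G (0, x, x)| < c := hGnear _ ⟨x, mem_univ x, rfl⟩ _ hclose
  have hG0 : G (0, x, x) = 2 * dist (φ l x) x := hφ.whitneyKernel_add_sub_self l x
  have hcx : c ≤ dist (φ l x) x := hdisp x (mem_univ x)
  linarith [abs_lt.1 hGs]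

end IsFlow

end Whitney

/-- Every regular flow on a compact metric space admits a field of cross sections. -/
theorem stmt0 {X : Type u} [MetricSpace X] [CompactSpace X] (φ : ℝ → X → X)
    (hφ : IsRegularFlow φ) :
    ∃ H : X → Set X, IsCrossSectionField φ H := by
  obtain ⟨l, -, hl⟩ := hφ.exists_pos_forall_apply_ne
  obtain ⟨c, hc, ρ, hρ, hV⟩ := hφ.1.exists_increasesAlongFlow_whitneyFn l hl
  exact ⟨_, hV.isCrossSectionField hc hφ.1 (hφ.1.continuous_whitneyFn l) hρ⟩
end

section
/- For a compact metric space X the following statements are equivalent: (1) there exists a one-parameter field of neighborhoods N : [0,1] × X → (nonempty compact subsets of X with the Hausdorff metric) such that N_r(x) is connected for every r ∈ [0,1] and x ∈ X; (2) X is a Peano continuum. -/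
open Set Metric Filter Topology

universe u

/-!
A Peano continuum is connected because `N_1(x) = X`, and locally connected because, for small
`r > 0`, the connected sets `N_r(x)` are neighbourhoods of `x` that shrink to `{x}`.

Conversely, fix a Whitney map `μ` on the hyperspace of nonempty compacta (continuous and strictly
monotone) and let `N_p(x)` be the union of the subcontinua `K ∋ x` with
`μ K ≤ (1 - p) μ {x} + p μ X`. It is connected as a union of continua through `x`, and it is `{x}`
for `p = 0` and `X` for `p = 1`. Hausdorff limits of continua are continua, so the graph of `N` is
closed; this gives compactness and upper semicontinuity. For lower semicontinuity, the boundary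
bumping theorem shrinks a continuum strictly below its level while still reaching close to a given
point, and local connectedness reattaches it to nearby base points. Uniform local connectedness
gives a uniform radius for the neighbourhood property.
-/

open TopologicalSpace

section Whitney

variable {X : Type*} [MetricSpace X] [BoundedSpace X]

lemma infDist_le_diam_univ (x : X) (K : NonemptyCompacts X) :
    infDist x K ≤ diam (univ : Set X) := by
  obtain ⟨k, hk⟩ := K.nonempty
  exact (infDist_le_dist_of_mem hk).trans
    (dist_le_diam_of_mem BoundedSpace.bounded_univ trivial trivial)

variable [SeparableSpace X] [Nonempty X]

noncomputable def whitney (K : NonemptyCompacts X) : ℝ :=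
  -∑' n, (2⁻¹ : ℝ) ^ n * infDist (denseSeq X n) K

lemma summable_geometric_two_inv_mul (c : ℝ) : Summable fun n : ℕ => (2⁻¹ : ℝ) ^ n * c :=
  (summable_geometric_of_lt_one (by norm_num) (by norm_num)).mul_right c

lemma summable_whitney (K : NonemptyCompacts X) :
    Summable fun n => (2⁻¹ : ℝ) ^ n * infDist (denseSeq X n) K :=
  .of_nonneg_of_le (fun n => mul_nonneg (by positivity) infDist_nonneg)
    (fun n => by gcongr; exact infDist_le_diam_univ _ K) (summable_geometric_two_inv_mul _)

lemma continuous_whitney : Continuous (whitney (X := X)) := by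
  refine (continuous_tsum
    (f := fun n (K : NonemptyCompacts X) => (2⁻¹ : ℝ) ^ n * infDist (denseSeq X n) K)
    (fun n => continuous_const.mul (lipschitz_infDist_set _).continuous)
    (summable_geometric_two_inv_mul (diam (univ : Set X))) fun n K => ?_).neg
  rw [Real.norm_of_nonneg (mul_nonneg (by positivity) infDist_nonneg)]
  gcongr
  exact infDist_le_diam_univ _ K

lemma strictMono_whitney : StrictMono (whitney (X := X)) := by
  intro K L hKL
  obtain ⟨b, hbL, hbK⟩ := exists_of_ssubset hKL
  have hb : 0 < infDist b K := by
    rw [← K.isCompact.isClosed.notMem_iff_infDist_pos K.nonempty]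
    exact hbK
  obtain ⟨n, hn⟩ := (denseRange_denseSeq X).exists_dist_lt b (half_pos hb)
  refine neg_lt_neg (Summable.tsum_lt_tsum (i := n) (fun m => ?_) ?_ (summable_whitney L)
    (summable_whitney K))
  · dsimp only
    gcongr
    exact infDist_le_infDist_of_subset hKL.le K.nonempty
  · have hL : infDist (denseSeq X n) L < infDist b K / 2 :=
      (infDist_le_dist_of_mem hbL).trans_lt (by rwa [dist_comm])
    have hK : infDist b K ≤ infDist (denseSeq X n) K + dist b (denseSeq X n) :=
      infDist_le_infDist_add_dist
    gcongr
    linarith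

end Whitney

namespace TopologicalSpace.NonemptyCompacts

variable {α : Type*} [TopologicalSpace α] [T2Space α]

theorem isClosed_setOf_mem : IsClosed {p : α × NonemptyCompacts α | p.1 ∈ p.2} := by
  rw [← isOpen_compl_iff, isOpen_iff_forall_mem_open]
  rintro ⟨x, K⟩ hxK
  obtain ⟨U, V, hU, hV, hxU, hKV, hUV⟩ := SeparatedNhds.of_isCompact_isCompact isCompact_singleton
    K.isCompact (disjoint_singleton_left.2 hxK)
  exact ⟨U ×ˢ {L : NonemptyCompacts α | ↑L ⊆ V},
    fun p hp hmem => hUV.ne_of_mem hp.1 (hp.2 hmem) rfl,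
    hU.prod (isOpen_subsets_of_isOpen hV), hxU rfl, hKV⟩

theorem isClosed_setOf_isPreconnected :
    IsClosed {K : NonemptyCompacts α | IsPreconnected (K : Set α)} := by
  rw [← isOpen_compl_iff, isOpen_iff_forall_mem_open]
  intro K hK
  obtain ⟨u, v, hu, hv, hKuv, huv, hKu, hKv⟩ : ∃ u v, IsClosed u ∧ IsClosed v ∧
      (K : Set α) ⊆ u ∪ v ∧ Disjoint u v ∧ ¬ (K : Set α) ⊆ u ∧ ¬ (K : Set α) ⊆ v := by
    simpa [isPreconnected_iff_subset_of_fully_disjoint_closed K.isCompact.isClosed] using hK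
  obtain ⟨U, V, hU, hV, hKU, hKV, hUV⟩ := SeparatedNhds.of_isCompact_isCompact
    (K.isCompact.inter_right hu) (K.isCompact.inter_right hv)
    (huv.mono inter_subset_right inter_subset_right)
  refine ⟨{L | ↑L ⊆ U ∪ V} ∩ {L | (↑L ∩ U).Nonempty} ∩ {L | (↑L ∩ V).Nonempty}, ?_,
    ((isOpen_subsets_of_isOpen (hU.union hV)).inter (isOpen_inter_nonempty_of_isOpen hU)).inter
      (isOpen_inter_nonempty_of_isOpen hV), ⟨fun z hz => ?_, ?_⟩, ?_⟩
  · rintro L ⟨⟨hLUV, hLU⟩, hLV⟩ hL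
    obtain ⟨z, -, hzU, hzV⟩ := hL U V hU hV hLUV hLU hLV
    exact hUV.ne_of_mem hzU hzV rfl
  · exact (hKuv hz).imp (fun h => hKU ⟨hz, h⟩) (fun h => hKV ⟨hz, h⟩)
  · obtain ⟨z, hzK, hzv⟩ := not_subset.1 hKv
    exact ⟨z, hzK, hKU ⟨hzK, (hKuv hzK).resolve_right hzv⟩⟩
  · obtain ⟨z, hzK, hzu⟩ := not_subset.1 hKu
    exact ⟨z, hzK, hKV ⟨hzK, (hKuv hzK).resolve_left hzu⟩⟩

end TopologicalSpace.NonemptyCompacts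

theorem exists_isClopen_of_connectedComponent_subset {α : Type*} [TopologicalSpace α]
    [T2Space α] [CompactSpace α] {x : α} {U : Set α} (hU : IsOpen U)
    (h : connectedComponent x ⊆ U) : ∃ V, IsClopen V ∧ x ∈ V ∧ V ⊆ U := by
  have hclosed : IsClosed (((↑) : α → ConnectedComponents α) '' Uᶜ) :=
    (hU.isClosed_compl.isCompact.image ConnectedComponents.continuous_coe).isClosed
  have hx : (x : ConnectedComponents α) ∉ (↑) '' Uᶜ := by
    rintro ⟨y, hyU, hyx⟩
    exact hyU (h (ConnectedComponents.coe_eq_coe'.1 hyx))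
  obtain ⟨W, hW, hxW, hWU⟩ := compact_exists_isClopen_in_isOpen hclosed.isOpen_compl hx
  exact ⟨(↑) ⁻¹' W, hW.preimage ConnectedComponents.continuous_coe, by exact hxW,
    fun y hyW => by_contra fun hyU => hWU hyW ⟨y, hyU, rfl⟩⟩

theorem IsPreconnected.boundary_bumping {X : Type*} [MetricSpace X] {K : Set X}
    (hK : IsPreconnected K) (hKc : IsCompact K) {x z : X} (hx : x ∈ K) (hz : z ∈ K) {t : ℝ}
    (ht : 0 < t) (htxz : t < dist x z) :
    ∃ C ⊆ K, IsCompact C ∧ IsPreconnected C ∧ x ∈ C ∧ z ∉ C ∧ ∃ w ∈ C, dist w z ≤ t := by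
  set F := K \ ball z t
  have : CompactSpace F := isCompact_iff_compactSpace.mp (hKc.diff isOpen_ball)
  have hFt (w : F) : t ≤ dist (w : X) z := by simpa using w.2.2
  let x' : F := ⟨x, hx, by simpa using htxz.le⟩
  refine ⟨(↑) '' connectedComponent x', ?_, isClosed_connectedComponent.isCompact.image
    continuous_subtype_val, isPreconnected_connectedComponent.image _
    continuous_subtype_val.continuousOn, ⟨x', mem_connectedComponent, rfl⟩, ?_, ?_⟩
  · rintro _ ⟨w, -, rfl⟩
    exact w.2.1
  · rintro ⟨w, -, hw⟩
    have := hFt w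
    rw [hw, dist_self] at this
    linarith
  -- Otherwise a clopen subset of `F` around the component of `x` would be clopen in `K` too.
  by_contra! hfar
  have hopen : IsOpen {w : X | t < dist w z} := isOpen_lt continuous_const (by fun_prop)
  obtain ⟨V, hV, hxV, hVfar⟩ := exists_isClopen_of_connectedComponent_subset
    (hopen.preimage continuous_subtype_val) fun w hw => hfar _ ⟨w, hw, rfl⟩
  obtain ⟨O, hO, rfl⟩ := isOpen_induced_iff.mp hV.isOpen
  have hD : IsClosed (((↑) : F → X) '' ((↑) ⁻¹' O)) :=
    (hV.isClosed.isCompact.image continuous_subtype_val).isClosed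
  obtain ⟨w, hwK, ⟨hwO, hwt⟩, hwD⟩ := hK _ _ (hO.inter hopen) hD.isOpen_compl
    (fun w hw => by
      by_cases hwD : w ∈ ((↑) : F → X) '' ((↑) ⁻¹' O)
      · obtain ⟨w', hw'O, rfl⟩ := hwD
        exact Or.inl ⟨hw'O, hVfar hw'O⟩
      · exact Or.inr hwD)
    ⟨x, hx, hxV, htxz⟩ ⟨z, hz, fun ⟨w', hw'O, hw'z⟩ => by
      have : t < dist z z := hw'z ▸ hVfar hw'O
      linarith [dist_self z]⟩
  exact hwD ⟨⟨w, hwK, by simpa using hwt.le⟩, hwO, rfl⟩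

theorem exists_pos_forall_dist_lt_exists_continuum {X : Type*} [MetricSpace X] [CompactSpace X]
    [LocallyConnectedSpace X] {ε : ℝ} (hε : 0 < ε) :
    ∃ r > 0, ∀ x y : X, dist x y < r → ∃ L : NonemptyCompacts X,
      IsPreconnected (L : Set X) ∧ x ∈ L ∧ y ∈ L ∧ (L : Set X) ⊆ closedBall x ε := by
  choose V hVx hV hVball using fun z : X =>
    locallyConnectedSpace_iff_connected_subsets.1 ‹_› z (ball z (ε / 2))
      (ball_mem_nhds z (half_pos hε))
  obtain ⟨r, hr, hrV⟩ := lebesgue_number_lemma_of_metric isCompact_univ (fun z => isOpen_interior)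
    fun w _ => mem_iUnion.2 ⟨w, mem_interior_iff_mem_nhds.2 (hVx w)⟩
  refine ⟨r, hr, fun x y hxy => ?_⟩
  obtain ⟨i, hi⟩ := hrV x trivial
  have hxV : x ∈ V i := interior_subset (hi (mem_ball_self hr))
  have hyV : y ∈ V i := interior_subset (hi (by rwa [mem_ball, dist_comm]))
  have hVi : closure (V i) ⊆ closedBall i (ε / 2) :=
    (closure_mono (hVball i)).trans closure_ball_subset_closedBall
  refine ⟨⟨⟨closure (V i), isClosed_closure.isCompact⟩, x, subset_closure hxV⟩, (hV i).closure,
    subset_closure hxV, subset_closure hyV, fun w hw => ?_⟩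
  have hw := mem_closedBall.1 (hVi hw)
  have hx := mem_closedBall.1 (hVi (subset_closure hxV))
  rw [mem_closedBall]
  linarith [dist_triangle_right w x i]

lemma dist_sup_le_of_subset_closedBall {X : Type*} [MetricSpace X] {C L : NonemptyCompacts X}
    {x : X} {ε : ℝ} (hx : x ∈ C) (hL : (L : Set X) ⊆ closedBall x ε) : dist (C ⊔ L) C ≤ ε := by
  have hε : 0 ≤ ε := nonempty_closedBall.1 (L.nonempty.mono hL)
  rw [NonemptyCompacts.dist_eq, NonemptyCompacts.coe_sup]
  refine hausdorffDist_le_of_mem_dist hε ?_ fun b hb => ⟨b, Or.inl hb, by simpa using hε⟩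
  rintro a (ha | ha)
  · exact ⟨a, ha, by simpa using hε⟩
  · exact ⟨x, hx, hL ha⟩

lemma subset_ballSet_of_hausdorffDist_lt {X : Type*} [MetricSpace X] {A B : Set X} {ε : ℝ}
    (hA : Bornology.IsBounded A) (hB : Bornology.IsBounded B) (hBne : B.Nonempty)
    (h : hausdorffDist A B < ε) : A ⊆ ballSet ε B := fun z hz => by
  obtain ⟨w, hw, hzw⟩ := exists_dist_lt_of_hausdorffDist_lt hz h
    (hausdorffEDist_ne_top_of_nonempty_of_bounded ⟨z, hz⟩ hBne hA hB)
  exact mem_iUnion₂.2 ⟨w, hw, mem_closedBall.2 hzw.le⟩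

section WhitneyField

variable {X : Type*} [MetricSpace X] [CompactSpace X] [Nonempty X]

noncomputable def whitneyLevel (x : X) (p : ℝ) : ℝ :=
  whitney {x} + p * (whitney (⊤ : NonemptyCompacts X) - whitney {x})

def whitneyField (p : ℝ) (x : X) : Set X :=
  {z | ∃ K : NonemptyCompacts X, IsPreconnected (K : Set X) ∧ x ∈ K ∧ z ∈ K ∧
    whitney K ≤ whitneyLevel x p}

lemma continuous_whitneyLevel : Continuous fun a : X × ℝ => whitneyLevel a.1 a.2 := by
  have h : Continuous fun a : X × ℝ => whitney ({a.1} : NonemptyCompacts X) :=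
    continuous_whitney.comp (NonemptyCompacts.continuous_singleton.comp continuous_fst)
  exact h.add (continuous_snd.mul (continuous_const.sub h))

lemma subset_whitneyField {p : ℝ} {x : X} {K : NonemptyCompacts X} (hK : IsPreconnected (K : Set X))
    (hx : x ∈ K) (hKx : whitney K ≤ whitneyLevel x p) : (K : Set X) ⊆ whitneyField p x :=
  fun _ hz => ⟨K, hK, hx, hz, hKx⟩

lemma self_mem_whitneyField {p : ℝ} (hp : 0 ≤ p) (x : X) : x ∈ whitneyField p x := by
  refine ⟨{x}, by simpa using isPreconnected_singleton, by simp, by simp, ?_⟩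
  have := strictMono_whitney.monotone (le_top : ({x} : NonemptyCompacts X) ≤ ⊤)
  exact le_add_of_nonneg_right (mul_nonneg hp (sub_nonneg.2 this))

lemma isPreconnected_whitneyField (p : ℝ) (x : X) : IsPreconnected (whitneyField p x) :=
  isPreconnected_of_forall x fun _ ⟨K, hK, hxK, hzK, hKx⟩ =>
    ⟨K, subset_whitneyField hK hxK hKx, hxK, hzK, hK⟩

lemma whitneyField_zero (x : X) : whitneyField 0 x = {x} := by
  refine subset_antisymm ?_ (singleton_subset_iff.2 (self_mem_whitneyField le_rfl x))
  rintro z ⟨K, -, hxK, hzK, hKx⟩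
  obtain rfl : K = {x} := by
    by_contra hne
    have := strictMono_whitney (lt_of_le_of_ne (SetLike.coe_subset_coe.1 (by simpa using hxK))
      (Ne.symm hne))
    simp only [whitneyLevel, zero_mul, add_zero] at hKx
    linarith
  simpa using hzK

lemma whitneyField_one [ConnectedSpace X] (x : X) : whitneyField 1 x = univ :=
  eq_univ_of_forall fun z => ⟨⊤, by simpa using isPreconnected_univ, by simp [← SetLike.mem_coe],
    by simp [← SetLike.mem_coe], by simp [whitneyLevel]⟩

lemma isClosed_graph_whitneyField :
    IsClosed {a : (X × ℝ) × X | a.2 ∈ whitneyField a.1.2 a.1.1} := by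
  have hS : IsClosed {b : ((X × ℝ) × X) × NonemptyCompacts X | IsPreconnected (b.2 : Set X) ∧
      b.1.1.1 ∈ b.2 ∧ b.1.2 ∈ b.2 ∧ whitney b.2 ≤ whitneyLevel b.1.1.1 b.1.1.2} :=
    (NonemptyCompacts.isClosed_setOf_isPreconnected.preimage continuous_snd).inter <|
      (NonemptyCompacts.isClosed_setOf_mem.preimage
        (continuous_fst.fst.fst.prodMk continuous_snd)).inter <|
      (NonemptyCompacts.isClosed_setOf_mem.preimage (continuous_fst.snd.prodMk continuous_snd)).inter <|
      isClosed_le (continuous_whitney.comp continuous_snd)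
        (continuous_whitneyLevel.comp continuous_fst.fst)
  convert isClosedMap_fst_of_compactSpace _ hS using 1
  ext a
  simp [whitneyField]

lemma isCompact_whitneyField (p : ℝ) (x : X) : IsCompact (whitneyField p x) :=
  (isClosed_graph_whitneyField.preimage (Continuous.prodMk_right ((x, p) : X × ℝ))).isCompact

lemma eventually_exists_mem_whitneyField_dist_lt [LocallyConnectedSpace X] {p : ℝ} {x z : X}
    (hz : z ∈ whitneyField p x) {η : ℝ} (hη : 0 < η) :
    ∀ᶠ a : X × ℝ in 𝓝 (x, p), 0 ≤ a.2 → ∃ z' ∈ whitneyField a.2 a.1, dist z' z < η := by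
  rcases lt_or_ge (dist x z) η with hxz | hxz
  · filter_upwards [(continuous_fst.dist continuous_const).continuousAt.eventually_lt
      continuousAt_const hxz] with a ha hp
    exact ⟨a.1, self_mem_whitneyField hp a.1, ha⟩
  obtain ⟨K, hK, hxK, hzK, hKx⟩ := hz
  obtain ⟨C, hCK, hCc, hC, hxC, hzC, w, hwC, hwz⟩ :=
    hK.boundary_bumping K.isCompact hxK hzK (half_pos hη) (by linarith)
  let C' : NonemptyCompacts X := ⟨⟨C, hCc⟩, x, hxC⟩
  have hC' : (C' : Set X) = C := rfl
  have hgap : whitney C' < whitneyLevel x p :=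
    (strictMono_whitney (lt_of_le_of_ne hCK fun h => by subst h; exact hzC hzK)).trans_le hKx
  obtain ⟨ε, hε, hεC⟩ := Metric.continuous_iff.1 continuous_whitney C'
    ((whitneyLevel x p - whitney C') / 2) (by linarith)
  obtain ⟨r, hr, hL⟩ := exists_pos_forall_dist_lt_exists_continuum (X := X) (half_pos hε)
  filter_upwards [continuousAt_const.eventually_lt continuous_whitneyLevel.continuousAt
      (show whitney C' + (whitneyLevel x p - whitney C') / 2 < whitneyLevel x p by linarith),
    (continuous_const.dist continuous_fst).continuousAt.eventually_lt continuousAt_const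
      (show dist x (x, p).1 < r by simpa using hr)] with a ha hax _
  obtain ⟨L, hL, hxL, hyL, hLx⟩ := hL x a.1 hax
  have hCL := hεC (C' ⊔ L) ((dist_sup_le_of_subset_closedBall hxC hLx).trans_lt (half_lt_self hε))
  rw [Real.dist_eq, abs_lt] at hCL
  refine ⟨w, subset_whitneyField (K := C' ⊔ L) ?_ (Or.inr hyL) (by linarith) (Or.inl hwC),
    by linarith⟩
  simpa [hC'] using hC.union x hxC hxL hL

lemma exists_closedBall_subset_whitneyField [LocallyConnectedSpace X] {p : ℝ} (hp : 0 < p) :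
    ∃ r > 0, ∀ x : X, closedBall x r ⊆ whitneyField p x := by
  rcases subsingleton_or_nontrivial X with hX | hX
  · exact ⟨1, one_pos, fun x y _ => Subsingleton.elim x y ▸ self_mem_whitneyField hp.le x⟩
  obtain ⟨x₀, -, hx₀⟩ := isCompact_univ.exists_isMaxOn univ_nonempty
    (continuous_whitney.comp (NonemptyCompacts.continuous_singleton (α := X))).continuousOn
  have hgap : whitney {x₀} < whitney (⊤ : NonemptyCompacts X) := by
    refine strictMono_whitney (lt_top_iff_ne_top.2 fun h => ?_)
    obtain ⟨y, hy⟩ := exists_ne x₀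
    exact hy (by simpa using (SetLike.ext_iff.1 h y).2 (by simp [← SetLike.mem_coe]))
  obtain ⟨ε, hε, hεw⟩ := Metric.uniformContinuous_iff.1
    (CompactSpace.uniformContinuous_of_continuous (continuous_whitney (X := X)))
    (p * (whitney ⊤ - whitney {x₀})) (by nlinarith)
  obtain ⟨r, hr, hL⟩ := exists_pos_forall_dist_lt_exists_continuum (X := X) (half_pos hε)
  refine ⟨r / 2, half_pos hr, fun x y hy => ?_⟩
  obtain ⟨L, hL, hxL, hyL, hLx⟩ := hL x y (by rw [dist_comm]; linarith [mem_closedBall.1 hy])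
  have hxL' := hεw ((dist_sup_le_of_subset_closedBall (C := {x}) rfl hLx).trans_lt
    (half_lt_self hε))
  rw [Real.dist_eq, abs_lt] at hxL'
  have hx : whitney {x} ≤ whitney {x₀} := hx₀ (mem_univ x)
  refine subset_whitneyField (K := {x} ⊔ L)
    (by simpa using isPreconnected_singleton.union x (mem_singleton x) hxL hL) (Or.inl rfl) ?_
    (Or.inr hyL)
  unfold whitneyLevel
  nlinarith

noncomputable def whitneyCompacts (a : X × unitInterval) : NonemptyCompacts X :=
  ⟨⟨whitneyField a.2 a.1, isCompact_whitneyField _ _⟩, a.1, self_mem_whitneyField a.2.2.1 a.1⟩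

@[simp]
lemma coe_whitneyCompacts (a : X × unitInterval) :
    (whitneyCompacts a : Set X) = whitneyField a.2 a.1 :=
  rfl

attribute [local instance] TopologicalSpace.vietoris in
lemma continuous_whitneyCompacts [LocallyConnectedSpace X] :
    Continuous (whitneyCompacts (X := X)) := by
  rw [NonemptyCompacts.isEmbedding_coe.continuous_iff, vietoris.continuous_iff]
  have hι : Continuous fun a : X × unitInterval => (a.1, (a.2 : ℝ)) := by fun_prop
  -- Vietoris continuity is upper semicontinuity (open `U`) plus lower semicontinuity (closed `F`).
  refine ⟨fun U hU => ?_, fun F hF => ?_⟩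
  · have hbad : IsClosed
        {b : (X × unitInterval) × X | b.2 ∈ whitneyField b.1.2 b.1.1 ∧ b.2 ∈ Uᶜ} :=
      (isClosed_graph_whitneyField.preimage
        (f := fun b : (X × unitInterval) × X => ((b.1.1, (b.1.2 : ℝ)), b.2)) (by fun_prop)).inter
        (hU.isClosed_compl.preimage continuous_snd)
    convert (isClosedMap_fst_of_compactSpace _ hbad).isOpen_compl using 1
    ext a
    simp [subset_def]
  · rw [← isOpen_compl_iff, isOpen_iff_mem_nhds]
    intro a ha
    obtain ⟨z, hz, hzF⟩ := not_subset.1 ha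
    obtain ⟨η, hη, hball⟩ := Metric.isOpen_iff.1 hF.isOpen_compl z hzF
    filter_upwards [(hι.tendsto a).eventually (eventually_exists_mem_whitneyField_dist_lt hz hη)]
      with b hb hsub
    obtain ⟨z', hz', hz'z⟩ := hb b.2.2.1
    exact hball (mem_ball.2 hz'z) (hsub hz')

lemma isOneParamNbhdField_whitneyField [ConnectedSpace X] [LocallyConnectedSpace X] :
    IsOneParamNbhdField (whitneyField (X := X)) := by
  have hcont : ∀ p ∈ Icc (0 : ℝ) 1, ∀ x : X, ∀ η > (0 : ℝ), ∃ δ > (0 : ℝ), ∀ q ∈ Icc (0 : ℝ) 1,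
      ∀ y : X, |p - q| < δ → dist x y < δ →
        hausdorffDist (whitneyField p x) (whitneyField q y) < η := by
    intro p hp x η hη
    obtain ⟨δ, hδ, hδη⟩ := Metric.continuous_iff.1 continuous_whitneyCompacts (x, ⟨p, hp⟩) η hη
    refine ⟨δ, hδ, fun q hq y hpq hxy => ?_⟩
    have := hδη (y, ⟨q, hq⟩) (by
      rw [Prod.dist_eq, Subtype.dist_eq, dist_comm, Real.dist_eq, abs_sub_comm]
      exact max_lt hxy hpq)
    rwa [NonemptyCompacts.dist_eq, hausdorffDist_comm] at this
  refine ⟨fun p hp x => ⟨isCompact_whitneyField p x, x, self_mem_whitneyField hp.1 x⟩, hcont,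
    fun p hp => ⟨⟨isCompact_whitneyField p, self_mem_whitneyField hp.1.le, fun x ε hε => ?_⟩,
      exists_closedBall_subset_whitneyField hp.1⟩, whitneyField_zero, whitneyField_one⟩
  obtain ⟨δ, hδ, hδε⟩ := hcont p (Ioc_subset_Icc_self hp) x ε hε
  refine ⟨δ, hδ, fun y hxy => subset_ballSet_of_hausdorffDist_lt
    (isCompact_whitneyField p y).isBounded (isCompact_whitneyField p x).isBounded
    ⟨x, self_mem_whitneyField hp.1.le x⟩ ?_⟩
  rw [hausdorffDist_comm]
  exact hδε p (Ioc_subset_Icc_self hp) y (by simpa using hδ) hxy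

end WhitneyField

lemma IsOneParamNbhdField.locallyConnectedSpace {X : Type*} [MetricSpace X] {N : ℝ → X → Set X}
    (hN : IsOneParamNbhdField N) (hconn : ∀ p ∈ Icc (0 : ℝ) 1, ∀ x, IsPreconnected (N p x)) :
    LocallyConnectedSpace X := by
  obtain ⟨hcpt, hcont, hnbhd, hzero, -⟩ := hN
  refine locallyConnectedSpace_iff_connected_subsets.2 fun x U hU => ?_
  obtain ⟨ε, hε, hεU⟩ := Metric.mem_nhds_iff.1 hU
  obtain ⟨δ, hδ, hδN⟩ := hcont 0 ⟨le_rfl, zero_le_one⟩ x (ε / 2) (half_pos hε)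
  set q := min (δ / 2) 1
  have hq : q ∈ Ioc (0 : ℝ) 1 := ⟨by positivity, min_le_right _ _⟩
  have hNq : hausdorffDist (N q x) {x} < ε / 2 := by
    rw [hausdorffDist_comm, ← hzero x]
    refine hδN q (Ioc_subset_Icc_self hq) x ?_ (by simpa using hδ)
    rw [zero_sub, abs_neg, abs_of_pos hq.1]
    linarith [min_le_left (δ / 2) 1]
  obtain ⟨-, r, hr, hball⟩ := hnbhd q hq
  refine ⟨N q x, mem_of_superset (closedBall_mem_nhds x hr) (hball x),
    hconn q (Ioc_subset_Icc_self hq) x, fun z hz => hεU ?_⟩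
  have := subset_ballSet_of_hausdorffDist_lt (hcpt q (Ioc_subset_Icc_self hq) x).1.isBounded
    Bornology.isBounded_singleton (singleton_nonempty x) hNq hz
  simp only [ballSet, mem_singleton_iff, iUnion_iUnion_eq_left, mem_closedBall] at this
  exact mem_ball.2 (by linarith)

/-- A compact metric space admits a one-parameter field of neighborhoods with connected
values if and only if it is a Peano continuum. -/
theorem stmt5 {X : Type u} [MetricSpace X] [CompactSpace X] [Nonempty X] :
    (∃ N : ℝ → X → Set X, IsOneParamNbhdField N ∧
        ∀ p ∈ Icc (0 : ℝ) 1, ∀ x : X, IsConnected (N p x)) ↔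
      (ConnectedSpace X ∧ LocallyConnectedSpace X) := by
  constructor
  · rintro ⟨N, hN, hconn⟩
    refine ⟨connectedSpace_iff_univ.2 ?_,
      hN.locallyConnectedSpace fun p hp x => (hconn p hp x).isPreconnected⟩
    simpa [hN.2.2.2.2] using hconn 1 ⟨zero_le_one, le_rfl⟩ (Classical.arbitrary X)
  · rintro ⟨_, _⟩
    exact ⟨whitneyField, isOneParamNbhdField_whitneyField, fun p hp x =>
      ⟨⟨x, self_mem_whitneyField hp.1 x⟩, isPreconnected_whitneyField p x⟩⟩
end

section
/- Let X be a Peano continuum, φ a regular expansive flow on X with a fixed family H_ε of cross sections as described, and let δ ∈ (0,r] be an expansive constant, meaning W^s_δ(x) ∩ W^u_δ(x) = {x} for all x ∈ X. Then for every x ∈ X, diam(Φ_t(x, W^s_δ(x))) → 0 as t → +∞. -/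
/-!
If the diameters did not tend to `0`, there would be times `tₙ → ∞` and pairs of points of
`Φ_{tₙ}(x, W^s_δ(x))` at distance at least `ε`; by compactness we may assume that they converge
to `p` and `q` and that `φ_{tₙ} x → w`. The reparametrizations carrying these points along the
orbit of `φ_{tₙ} x` through the sections are uniformly equicontinuous (the sections are
transversal and a regular flow has no small periods) and uniformly increasing (the field is
monotonous). Their limsup is therefore a reparametrization of all of `ℝ`, which puts `p` and `q`
in `W^s_δ(w) ∩ W^u_δ(w) = {w}`, a contradiction.
-/

open Set Metric Filter Topology

universe u

theorem Monotone.continuous_of_forall_add_le {K : ℝ → ℝ} (hK : Monotone K)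
    (h : ∀ c > 0, ∃ η > 0, ∀ s, K (s + η) ≤ K s + c) : Continuous K := by
  refine Metric.continuous_iff.2 fun s c hc => ?_
  obtain ⟨η, hη, hstep⟩ := h (c / 2) (half_pos hc)
  refine ⟨η, hη, fun s' hs' => ?_⟩
  rw [Real.dist_eq, abs_lt] at hs' ⊢
  rcases le_total s s' with hss' | hss'
  · have := hK (show s' ≤ s + η by linarith)
    constructor <;> linarith [hK hss', hstep s]
  · have := hK (show s ≤ s' + η by linarith)
    constructor <;> linarith [hK hss', hstep s']

theorem Monotone.tendsto_atTop_atBot_of_add_le {K : ℝ → ℝ} (hK : Monotone K) {e : ℝ}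
    (he : 0 < e) (hstep : ∀ s, K s + e ≤ K (s + 1)) :
    Tendsto K atTop atTop ∧ Tendsto K atBot atBot := by
  have hup : ∀ n : ℕ, K 0 + n * e ≤ K n := fun n => by
    induction n with
    | zero => simp
    | succ n ih => push_cast; linarith [hstep n]
  have hdown : ∀ n : ℕ, K (-n) ≤ K 0 - n * e := fun n => by
    induction n with
    | zero => simp
    | succ n ih =>
      have := hstep (-(n + 1))
      push_cast
      rw [show -((n : ℝ) + 1) + 1 = -n by ring] at this
      linarith
  refine ⟨tendsto_atTop_atTop_of_monotone hK fun b => ?_,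
    tendsto_atBot_atBot_of_monotone hK fun b => ?_⟩
  · obtain ⟨n, hn⟩ := exists_nat_ge ((b - K 0) / e)
    refine ⟨n, le_trans ?_ (hup n)⟩
    rw [div_le_iff₀ he] at hn
    linarith
  · obtain ⟨n, hn⟩ := exists_nat_ge ((K 0 - b) / e)
    refine ⟨-n, (hdown n).trans ?_⟩
    rw [div_le_iff₀ he] at hn
    linarith

theorem exists_dist_lt_of_not_tendsto_diam {X : Type*} [PseudoMetricSpace X] {S : ℝ → Set X}
    (h : ¬ Tendsto (fun t => diam (S t)) atTop (𝓝 0)) :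
    ∃ ε > 0, ∃ t : ℕ → ℝ, (∀ n : ℕ, n ≤ t n) ∧
      ∀ n, ∃ p ∈ S (t n), ∃ q ∈ S (t n), ε < dist p q := by
  rw [Metric.tendsto_atTop] at h
  push Not at h
  obtain ⟨ε, hε, hN⟩ := h
  choose t ht hdiam using fun n : ℕ => hN n
  refine ⟨ε / 2, half_pos hε, t, ht, fun n => ?_⟩
  by_contra! hsmall
  have hle := diam_le_of_forall_dist_le (by positivity) hsmall
  have hge := hdiam n
  rw [Real.dist_eq, sub_zero, abs_of_nonneg diam_nonneg] at hge
  linarith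

namespace IsFlow

section

variable {X : Type u} [TopologicalSpace X] {φ : ℝ → X → X}

theorem tendsto_apply (hφ : IsFlow φ) {ι : Type*} {l : Filter ι} {r : ι → ℝ} {z : ι → X}
    {t : ℝ} {w : X} (hr : Tendsto r l (𝓝 t)) (hz : Tendsto z l (𝓝 w)) :
    Tendsto (fun i => φ (r i) (z i)) l (𝓝 (φ t w)) :=
  (hφ.1.tendsto (t, w)).comp (hr.prodMk_nhds hz)

theorem apply_neg_of_apply_eq (hφ : IsFlow φ) {z : X} {d : ℝ} (hz : φ d z = z) :
    φ (-d) z = z := by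
  conv_lhs => rw [← hz]
  rw [← hφ.2.2, neg_add_cancel, hφ.2.1]

theorem apply_intCast_mul_of_apply_eq (hφ : IsFlow φ) {z : X} {d : ℝ} (hz : φ d z = z)
    (k : ℤ) : φ (k * d) z = z := by
  induction k using Int.induction_on with
  | zero => simpa using hφ.2.1 z
  | succ k ih => rw [Int.cast_add, Int.cast_one, add_one_mul, add_comm, hφ.2.2, ih, hz]
  | pred k ih =>
    rw [Int.cast_sub, Int.cast_one, sub_one_mul, sub_eq_neg_add, hφ.2.2, ih,
      hφ.apply_neg_of_apply_eq hz]

end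

variable {X : Type u} [MetricSpace X] [CompactSpace X] {φ : ℝ → X → X}

theorem exists_forall_dist_apply_lt (hφ : IsFlow φ) {c : ℝ} (hc : 0 < c) :
    ∃ η > 0, ∀ r, |r| < η → ∀ z, dist (φ r z) z < c := by
  have hunif := (isCompact_Icc.prod isCompact_univ).uniformContinuousOn_of_continuous
    (s := Icc (-1 : ℝ) 1 ×ˢ (univ : Set X)) hφ.1.continuousOn
  obtain ⟨η, hη, hclose⟩ := Metric.uniformContinuousOn_iff.1 hunif c hc
  refine ⟨min η 1, lt_min hη one_pos, fun r hr z => ?_⟩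
  have hr1 : |r| ≤ 1 := hr.le.trans (min_le_right _ _)
  have h := hclose (r, z) ⟨abs_le.1 hr1, mem_univ z⟩ (0, z) ⟨by norm_num, mem_univ z⟩
    (by simpa [Prod.dist_eq] using hr.trans_le (min_le_left _ _))
  simpa [hφ.2.1] using h

end IsFlow

namespace IsRegularFlow

variable {X : Type u} [MetricSpace X] [CompactSpace X] {φ : ℝ → X → X}

theorem exists_forall_lt_dist (hφ : IsRegularFlow φ) :
    ∃ c > 0, ∀ z : X, ∃ t, c < dist (φ t z) z := by
  let U : ℕ → Set X := fun n => {z | ∃ t, 1 / ((n : ℝ) + 1) < dist (φ t z) z}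
  have hopen : ∀ n, IsOpen (U n) := fun n => by
    simp only [U, ofPred_exists]
    exact isOpen_iUnion fun t =>
      isOpen_lt continuous_const ((hφ.1.1.comp (Continuous.prodMk_right t)).dist continuous_id)
  have hcover : univ ⊆ ⋃ n, U n := fun z _ => by
    obtain ⟨t, ht⟩ := hφ.2 z
    obtain ⟨n, hn⟩ := exists_nat_one_div_lt (dist_pos.2 ht)
    exact mem_iUnion.2 ⟨n, t, hn⟩
  have hmono : Monotone U := fun m n hmn z ⟨t, ht⟩ =>
    ⟨t, lt_of_le_of_lt (one_div_le_one_div_of_le (by positivity) (by gcongr)) ht⟩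
  obtain ⟨n, hn⟩ := isCompact_univ.elim_directed_cover U hopen hcover hmono.directed_le
  exact ⟨1 / ((n : ℝ) + 1), by positivity, fun z => hn (mem_univ z)⟩

theorem exists_pos_le_abs_of_apply_eq (hφ : IsRegularFlow φ) :
    ∃ T > 0, ∀ (z : X) (d : ℝ), φ d z = z → d ≠ 0 → T ≤ |d| := by
  obtain ⟨c, hc, hmove⟩ := hφ.exists_forall_lt_dist
  obtain ⟨η, hη, hsmall⟩ := hφ.1.exists_forall_dist_apply_lt hc
  refine ⟨η, hη, fun z d hz hd => le_of_not_gt fun hdη => ?_⟩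
  have hper : φ |d| z = z := by
    rcases abs_choice d with h | h <;> rw [h]
    exacts [hz, hφ.1.apply_neg_of_apply_eq hz]
  have hpos : 0 < |d| := abs_pos.2 hd
  obtain ⟨t, ht⟩ := hmove z
  set r := t - ⌊t / |d|⌋ * |d|
  have hr : φ t z = φ r z := by
    rw [show t = r + ⌊t / |d|⌋ * |d| by ring, hφ.1.2.2,
      hφ.1.apply_intCast_mul_of_apply_eq hper]
  have hrη : |r| < η := by
    rw [abs_of_nonneg (Int.sub_floor_div_mul_nonneg t hpos)]
    exact (Int.sub_floor_div_mul_lt t hpos).trans hdη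
  exact (hsmall r hrη z).not_gt (hr ▸ ht)

end IsRegularFlow

namespace IsFieldOfCompactSets

variable {X : Type u} [MetricSpace X] {H : X → Set X}

theorem isClosed_graph (hH : IsFieldOfCompactSets H) : IsClosed {p : X × X | p.2 ∈ H p.1} := by
  refine isClosed_iff_frequently.2 fun ⟨w, z⟩ hfreq => ?_
  have hclose : ∀ ε > 0, infDist z (H w) ≤ ε + ε := fun ε hε => by
    obtain ⟨δ, hδ, hsemi⟩ := hH.2.2 w ε hε
    obtain ⟨⟨w', z'⟩, hmem, hball⟩ :=
      (hfreq.and_eventually (ball_mem_nhds (w, z) (lt_min hδ hε))).exists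
    rw [Prod.dist_eq, max_lt_iff, lt_min_iff, lt_min_iff] at hball
    obtain ⟨v, hv, hz'v⟩ := mem_iUnion₂.1 (hsemi w' (by rw [dist_comm]; exact hball.1.1) hmem)
    calc infDist z (H w) ≤ dist z v := infDist_le_dist_of_mem hv
      _ ≤ dist z z' + dist z' v := dist_triangle _ _ _
      _ ≤ ε + ε := add_le_add (by rw [dist_comm]; exact hball.2.2.le) (mem_closedBall.1 hz'v)
  have hzero : infDist z (H w) ≤ 0 :=
    le_of_forall_pos_le_add fun ε hε => by simpa using hclose (ε / 2) (half_pos hε)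
  exact ((hH.1 w).isClosed.mem_iff_infDist_zero ⟨w, hH.2.1 w⟩).2
    (le_antisymm hzero infDist_nonneg)

theorem mem_of_tendsto (hH : IsFieldOfCompactSets H) {ι : Type*} {l : Filter ι} [l.NeBot]
    {w z : ι → X} {w' z' : X} (hw : Tendsto w l (𝓝 w')) (hz : Tendsto z l (𝓝 z'))
    (hmem : ∀ᶠ i in l, z i ∈ H (w i)) : z' ∈ H w' :=
  hH.isClosed_graph.mem_of_tendsto (hw.prodMk_nhds hz) hmem

end IsFieldOfCompactSets

section Tracking

variable {X : Type u} [MetricSpace X] {φ : ℝ → X → X} {H : X → Set X}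

def IsTrackingOn (φ : ℝ → X → X) (H : X → Set X) (x y : X) (k : ℝ → ℝ) (I : Set ℝ) : Prop :=
  ∀ s ∈ I, φ (k s) y ∈ H (φ s x)

theorem IsCrossSectionField.exists_pos_eq_of_mem [CompactSpace X] (hφ : IsRegularFlow φ)
    (hH : IsCrossSectionField φ H) :
    ∃ σ > 0, ∀ x y a b, φ a y ∈ H x → φ b y ∈ H x → |a - b| < σ → a = b := by
  obtain ⟨T, hT, hperiod⟩ := hφ.exists_pos_le_abs_of_apply_eq
  obtain ⟨-, τ, hτ, -, hsec⟩ := hH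
  refine ⟨min τ T, lt_min hτ hT, fun x y a b ha hb hab => ?_⟩
  have hflow : φ a y = φ (a - b) (φ b y) := by rw [← hφ.1.2.2, sub_add_cancel]
  have hfix : φ (a - b) (φ b y) = φ b y := by
    rw [← hflow]
    exact (hsec x _ hb).subset ⟨ha, a - b, (hab.trans_le (min_le_left _ _)).le, hflow⟩
  by_contra hne
  exact (hperiod _ _ hfix (sub_ne_zero.2 hne)).not_gt (hab.trans_le (min_le_right _ _))

theorem IsTrackingOn.eqOn [CompactSpace X] (hφ : IsRegularFlow φ)
    (hH : IsCrossSectionField φ H) {x y : X} {g₁ g₂ : ℝ → ℝ}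
    (hc₁ : ContinuousOn g₁ (Ici 0)) (hc₂ : ContinuousOn g₂ (Ici 0))
    (h₁ : IsTrackingOn φ H x y g₁ (Ici 0)) (h₂ : IsTrackingOn φ H x y g₂ (Ici 0))
    (h0 : g₁ 0 = g₂ 0) : EqOn g₁ g₂ (Ici 0) := by
  obtain ⟨σ, hσ, hsep⟩ := hH.exists_pos_eq_of_mem hφ
  have hsep' : ∀ s ≥ 0, |g₁ s - g₂ s| < σ → g₁ s = g₂ s := fun s hs =>
    hsep _ y _ _ (h₁ s hs) (h₂ s hs)
  intro s hs
  by_contra hne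
  have hcont : ContinuousOn (fun u => |g₁ u - g₂ u|) (Icc 0 s) :=
    ((hc₁.sub hc₂).mono Icc_subset_Ici_self).abs
  have hmid : σ / 2 ∈ Icc |g₁ 0 - g₂ 0| |g₁ s - g₂ s| := by
    rw [h0, sub_self, abs_zero]
    exact ⟨by positivity, by linarith [le_of_not_gt fun h => hne (hsep' s hs h)]⟩
  obtain ⟨u, hu, hgu⟩ := intermediate_value_Icc (mem_Ici.1 hs) hcont hmid
  have hgu' : |g₁ u - g₂ u| = σ / 2 := hgu
  rw [hsep' u hu.1 (by linarith), sub_self, abs_zero] at hgu'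
  linarith

section Moduli

variable [CompactSpace X]

/-- By compactness: otherwise a limit point would meet its own section at two times closer
than the separation constant of `exists_pos_eq_of_mem`. -/
theorem exists_pos_tracking_increment_le (hφ : IsRegularFlow φ) (hH : IsCrossSectionField φ H)
    {c : ℝ} (hc : 0 < c) :
    ∃ η > 0, ∀ x y k a b, ContinuousOn k (Icc a b) → IsTrackingOn φ H x y k (Icc a b) →
      a ≤ b → b ≤ a + η → k b ≤ k a + c := by
  obtain ⟨σ, hσ, hsep⟩ := hH.exists_pos_eq_of_mem hφ
  obtain ⟨σ', hσ', hσ'σ, hσ'c⟩ : ∃ σ', 0 < σ' ∧ σ' < σ ∧ σ' < c :=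
    ⟨min c σ / 2, by positivity, by linarith [min_le_right c σ], by linarith [min_le_left c σ]⟩
  by_contra! hbad
  choose x y k a b hcont htr hab hba hk using fun n : ℕ => hbad (1 / ((n : ℝ) + 1)) (by positivity)
  choose u hu hku using fun n => intermediate_value_Icc (hab n) (hcont n)
    (show k n (a n) + σ' ∈ Icc (k n (a n)) (k n (b n)) from ⟨by linarith, by linarith [hk n]⟩)
  set P := fun n => φ (k n (a n)) (y n)
  set W := fun n => φ (a n) (x n)
  obtain ⟨⟨W', P'⟩, ψ, hψ, hlim⟩ := CompactSpace.tendsto_subseq fun n => (W n, P n)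
  have hW : Tendsto (W ∘ ψ) atTop (𝓝 W') := (continuous_fst.tendsto _).comp hlim
  have hP : Tendsto (P ∘ ψ) atTop (𝓝 P') := (continuous_snd.tendsto _).comp hlim
  have hshrink : Tendsto (fun j => u (ψ j) - a (ψ j)) atTop (𝓝 0) :=
    squeeze_zero (fun j => sub_nonneg.2 (hu (ψ j)).1)
      (fun j => show _ ≤ 1 / ((ψ j : ℝ) + 1) by linarith [(hu (ψ j)).2, hba (ψ j)])
      (tendsto_one_div_add_atTop_nhds_zero_nat.comp hψ.tendsto_atTop)
  have hP'W' : P' ∈ H W' :=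
    hH.1.mem_of_tendsto hW hP (Eventually.of_forall fun j => htr _ _ ⟨le_rfl, hab _⟩)
  have hmoved : φ σ' P' ∈ H W' := by
    refine hH.1.mem_of_tendsto (w := fun j => φ (u (ψ j) - a (ψ j)) (W (ψ j)))
      (z := fun j => φ σ' (P (ψ j))) (by simpa [hφ.1.2.1] using hφ.1.tendsto_apply hshrink hW)
      (hφ.1.tendsto_apply tendsto_const_nhds hP) (Eventually.of_forall fun j => ?_)
    simp only [P, W, ← hφ.1.2.2, sub_add_cancel, add_comm σ', ← hku]
    exact htr _ _ (hu _)
  have := hsep W' P' σ' 0 hmoved (by rwa [hφ.1.2.1]) (by rwa [sub_zero, abs_of_pos hσ'])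
  exact hσ'.ne' this

theorem exists_tracking_increment_le (hφ : IsRegularFlow φ)
    (hH : IsCrossSectionField φ H) (L : ℝ) :
    ∃ M, ∀ x y k a b, ContinuousOn k (Icc a b) → IsTrackingOn φ H x y k (Icc a b) →
      a ≤ b → b ≤ a + L → k b ≤ k a + M := by
  obtain ⟨η, hη, hstep⟩ := exists_pos_tracking_increment_le hφ hH one_pos
  have hiter : ∀ n : ℕ, ∀ x y k a b, ContinuousOn k (Icc a b) →
      IsTrackingOn φ H x y k (Icc a b) → a ≤ b → b ≤ a + n * η → k b ≤ k a + n := by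
    intro n
    induction n with
    | zero =>
      intro x y k a b _ _ hab hba
      rw [le_antisymm (by simpa using hba) hab]
      simp
    | succ n ih =>
      intro x y k a b hc htr hab hba
      push_cast at hba ⊢
      by_cases hshort : b ≤ a + η
      · linarith [hstep x y k a b hc htr hab hshort, n.cast_nonneg (α := ℝ)]
      have hsub₁ : Icc a (b - η) ⊆ Icc a b := Icc_subset_Icc_right (by linarith)
      have hsub₂ : Icc (b - η) b ⊆ Icc a b := Icc_subset_Icc_left (by linarith)
      have h₁ := ih x y k a (b - η) (hc.mono hsub₁) (fun s hs => htr s (hsub₁ hs))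
        (by linarith) (by linarith)
      have h₂ := hstep x y k (b - η) b (hc.mono hsub₂) (fun s hs => htr s (hsub₂ hs))
        (by linarith) (by linarith)
      linarith
  refine ⟨⌈L / η⌉₊, fun x y k a b hc htr hab hba => hiter _ x y k a b hc htr hab ?_⟩
  calc b ≤ a + L / η * η := by rwa [div_mul_cancel₀ L hη.ne']
    _ ≤ a + ⌈L / η⌉₊ * η := by gcongr; exact Nat.le_ceil _

/-- Otherwise, in the limit, one point would lie in the sections of two nearby points of the
same orbit, which monotonicity of the field forbids. -/
theorem exists_pos_tracking_increment_ge (hφ : IsFlow φ) (hH : IsFieldOfCompactSets H)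
    (hmon : IsMonotonousField φ H) {d : ℝ} (hd : 0 < d) :
    ∃ e > 0, ∀ x y k a, MonotoneOn k (Icc a (a + d)) →
      IsTrackingOn φ H x y k (Icc a (a + d)) → k a + e ≤ k (a + d) := by
  obtain ⟨ε, hε, hdisj⟩ := hmon
  obtain ⟨d', hd', hd'ε, hd'd⟩ : ∃ d', 0 < d' ∧ d' < ε ∧ d' ≤ d :=
    ⟨min d (ε / 2), by positivity, by linarith [min_le_right d (ε / 2)], min_le_left _ _⟩
  by_contra! hbad
  choose x y k a hmono htr hk using fun n : ℕ => hbad (1 / ((n : ℝ) + 1)) (by positivity)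
  have hIcc : ∀ n, a n ∈ Icc (a n) (a n + d) ∧ a n + d' ∈ Icc (a n) (a n + d) := fun n =>
    ⟨⟨le_rfl, by linarith⟩, ⟨by linarith, by linarith⟩⟩
  set P := fun n => φ (k n (a n)) (y n)
  set W := fun n => φ (a n) (x n)
  obtain ⟨⟨W', P'⟩, ψ, hψ, hlim⟩ := CompactSpace.tendsto_subseq fun n => (W n, P n)
  have hW : Tendsto (W ∘ ψ) atTop (𝓝 W') := (continuous_fst.tendsto _).comp hlim
  have hP : Tendsto (P ∘ ψ) atTop (𝓝 P') := (continuous_snd.tendsto _).comp hlim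
  have hshrink : Tendsto (fun j => k (ψ j) (a (ψ j) + d') - k (ψ j) (a (ψ j))) atTop (𝓝 0) := by
    refine squeeze_zero (fun j => sub_nonneg.2 ?_) (fun j => ?_)
      (tendsto_one_div_add_atTop_nhds_zero_nat.comp hψ.tendsto_atTop)
    · exact hmono _ (hIcc _).1 (hIcc _).2 (by linarith)
    · have := hmono (ψ j) (hIcc _).2 ⟨by linarith, le_rfl⟩ (by linarith)
      show _ ≤ 1 / ((ψ j : ℝ) + 1)
      linarith [hk (ψ j)]
  have hP'W' : P' ∈ H W' :=
    hH.mem_of_tendsto hW hP (Eventually.of_forall fun j => htr _ _ (hIcc _).1)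
  have hP'W'' : P' ∈ H (φ d' W') := by
    refine hH.mem_of_tendsto (w := fun j => φ d' (W (ψ j)))
      (z := fun j => φ (k (ψ j) (a (ψ j) + d') - k (ψ j) (a (ψ j))) (P (ψ j)))
      (hφ.tendsto_apply tendsto_const_nhds hW)
      (by simpa [hφ.2.1] using hφ.tendsto_apply hshrink hP) (Eventually.of_forall fun j => ?_)
    simp only [P, W, ← hφ.2.2, sub_add_cancel, add_comm d']
    exact htr _ _ (hIcc _).2
  exact (hdisj W' d' ⟨hd', hd'ε⟩).subset ⟨hP'W', hP'W''⟩

end Moduli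

theorem IsMonotonousField.strictMono_of_isTrackingOn (hmon : IsMonotonousField φ H)
    (hφ : IsFlow φ) {x y : X} {K : ℝ → ℝ} (hK : Monotone K)
    (htr : IsTrackingOn φ H x y K univ) : StrictMono K := by
  obtain ⟨ε, hε, hdisj⟩ := hmon
  refine hK.strictMono_of_injective fun s s' hss' => ?_
  by_contra hne
  wlog hlt : s < s' generalizing s s'
  · exact this s' s hss'.symm (Ne.symm hne) (lt_of_le_of_ne (not_lt.1 hlt) (Ne.symm hne))
  set d := min (s' - s) (ε / 2)
  have hd : d ∈ Ioo 0 ε := ⟨by positivity, by linarith [min_le_right (s' - s) (ε / 2)]⟩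
  have hKd : K (s + d) = K s :=
    le_antisymm (hss' ▸ hK (by linarith [min_le_left (s' - s) (ε / 2)])) (hK (by linarith [hd.1]))
  have hmem := htr (s + d) trivial
  rw [hKd, add_comm, hφ.2.2] at hmem
  exact (hdisj _ d hd).subset ⟨htr s trivial, hmem⟩

theorem mem_Wstable_of_isTrackingOn {x y : X} {K : ℝ → ℝ} (hK : Continuous K)
    (hKs : StrictMono K) (hK0 : K 0 = 0) (htop : Tendsto K atTop atTop)
    (htr : IsTrackingOn φ H x y K (Ici 0)) : y ∈ Wstable φ H x := by
  refine ⟨K, hK.continuousOn, hKs.strictMonoOn _, hK0, fun s hs => ?_, fun v hv => ?_, htr⟩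
  · exact hK0 ▸ hKs.monotone hs
  · obtain ⟨s, hsv, hs⟩ := ((htop.eventually_ge_atTop v).and (eventually_ge_atTop 0)).exists
    exact image_mono Icc_subset_Ici_self
      (intermediate_value_Icc hs hK.continuousOn ⟨by rw [hK0]; exact hv, hsv⟩)

theorem mem_Wunstable_of_isTrackingOn {x y : X} {K : ℝ → ℝ} (hK : Continuous K)
    (hKs : StrictMono K) (hK0 : K 0 = 0) (hbot : Tendsto K atBot atBot)
    (htr : IsTrackingOn φ H x y K (Iic 0)) : y ∈ Wunstable φ H x := by
  refine ⟨K, hK.continuousOn, hKs.strictMonoOn _, hK0, fun s hs => ?_, fun v hv => ?_, htr⟩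
  · exact hK0 ▸ hKs.monotone hs
  · obtain ⟨s, hsv, hs⟩ := ((hbot.eventually_le_atBot v).and (eventually_le_atBot 0)).exists
    exact image_mono Icc_subset_Iic_self
      (intermediate_value_Icc hs hK.continuousOn ⟨hsv, by rw [hK0]; exact hv⟩)

section Limit

variable [CompactSpace X]

theorem exists_abs_le_of_isTrackingOn (hφ : IsRegularFlow φ) (hH : IsCrossSectionField φ H)
    {w u : ℕ → X} {k : ℕ → ℝ → ℝ} (hk0 : ∀ n, k n 0 = 0) (hkm : ∀ n, Monotone (k n))
    (hkc : ∀ n, Continuous (k n))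
    (htr : ∀ L, ∀ᶠ n in atTop, IsTrackingOn φ H (w n) (u n) (k n) (Icc (-L) L)) (s : ℝ) :
    ∃ M, ∀ᶠ n in atTop, |k n s| ≤ M := by
  obtain ⟨M, hM⟩ := exists_tracking_increment_le hφ hH |s|
  refine ⟨|M|, (htr |s|).mono fun n hn => abs_le.2 ?_⟩
  have hsub : ∀ {a b}, -|s| ≤ a → b ≤ |s| → IsTrackingOn φ H (w n) (u n) (k n) (Icc a b) :=
    fun ha hb t ht => hn t ⟨ha.trans ht.1, ht.2.trans hb⟩
  rcases le_total 0 s with hs | hs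
  · have := hM _ _ (k n) 0 s (hkc n).continuousOn (hsub (by simp) (le_abs_self s)) hs
      (by simp [abs_of_nonneg hs])
    constructor <;> linarith [hk0 n, hkm n hs, neg_abs_le M, le_abs_self M]
  · have := hM _ _ (k n) s 0 (hkc n).continuousOn (hsub (neg_abs_le s) (by simp)) hs
      (by simp [abs_of_nonpos hs])
    constructor <;> linarith [hk0 n, hkm n hs, neg_abs_le M, le_abs_self M]

/-- The limit reparametrization is `s ↦ limsup (k n s)`: the uniform moduli above make it a
continuous, strictly increasing, proper tracking map on all of `ℝ`. -/
theorem mem_Wstable_inter_Wunstable_of_isTrackingOn (hφ : IsRegularFlow φ)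
    (hH : IsCrossSectionField φ H) (hmon : IsMonotonousField φ H)
    {w u : ℕ → X} {w' u' : X} {k : ℕ → ℝ → ℝ} (hk0 : ∀ n, k n 0 = 0)
    (hkm : ∀ n, Monotone (k n)) (hkc : ∀ n, Continuous (k n))
    (htr : ∀ L, ∀ᶠ n in atTop, IsTrackingOn φ H (w n) (u n) (k n) (Icc (-L) L))
    (hw : Tendsto w atTop (𝓝 w')) (hu : Tendsto u atTop (𝓝 u')) :
    u' ∈ Wstable φ H w' ∩ Wunstable φ H w' := by
  choose M hM using exists_abs_le_of_isTrackingOn hφ hH hk0 hkm hkc htr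
  have hbdd : ∀ s, IsBoundedUnder (· ≤ ·) atTop (fun n => k n s) := fun s =>
    isBoundedUnder_of_eventually_le ((hM s).mono fun _ h => (abs_le.1 h).2)
  have hcobdd : ∀ s, IsCoboundedUnder (· ≤ ·) atTop (fun n => k n s) := fun s =>
    isCoboundedUnder_le_of_eventually_le _ ((hM s).mono fun _ h => (abs_le.1 h).1)
  set K := fun s => limsup (fun n => k n s) atTop
  have hle : ∀ s s' c, (∀ᶠ n in atTop, k n s' ≤ k n s + c) → K s' ≤ K s + c := fun s s' c h =>
    calc K s' ≤ limsup (fun n => k n s + c) atTop := limsup_le_limsup h (hcobdd s')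
          (isBoundedUnder_of_eventually_le ((hM s).mono fun _ h =>
            add_le_add_left (abs_le.1 h).2 c))
      _ = K s + c := limsup_add_const _ _ _ (hbdd s) (hcobdd s)
  have htrIcc : ∀ a b, ∀ᶠ n in atTop, IsTrackingOn φ H (w n) (u n) (k n) (Icc a b) := fun a b =>
    (htr (max |a| |b|)).mono fun n hn t ht => hn t
      ⟨le_trans (neg_le.1 ((neg_le_abs a).trans (le_max_left _ _))) ht.1,
        ht.2.trans ((le_abs_self b).trans (le_max_right _ _))⟩
  have hK0 : K 0 = 0 := by simp [K, hk0]
  have hKm : Monotone K := fun s s' hss' => by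
    simpa using hle s' s 0 (Eventually.of_forall fun n => by simpa using hkm n hss')
  have hKc : Continuous K := hKm.continuous_of_forall_add_le fun c hc => by
    obtain ⟨η, hη, hstep⟩ := exists_pos_tracking_increment_le hφ hH hc
    exact ⟨η, hη, fun s => hle s (s + η) c ((htrIcc s (s + η)).mono fun n hn =>
      hstep _ _ _ _ _ (hkc n).continuousOn hn (by linarith) le_rfl)⟩
  obtain ⟨e, he, hstep⟩ := exists_pos_tracking_increment_ge hφ.1 hH.1 hmon one_pos
  have hKstep : ∀ s, K s + e ≤ K (s + 1) := fun s => by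
    have := hle (s + 1) s (-e) ((htrIcc s (s + 1)).mono fun n hn => by
      linarith [hstep _ _ _ s ((hkm n).monotoneOn _) hn])
    linarith
  have hKtr : IsTrackingOn φ H w' u' K univ := fun s _ => by
    obtain ⟨ψ, hψK, hψ⟩ := exists_seq_tendsto_limsup (hcobdd s) (hbdd s)
    exact hH.1.mem_of_tendsto (hφ.1.tendsto_apply tendsto_const_nhds (hw.comp hψ))
      (hφ.1.tendsto_apply hψK (hu.comp hψ))
      (hψ.eventually ((htrIcc s s).mono fun n hn => hn s ⟨le_rfl, le_rfl⟩))
  have hKs := hmon.strictMono_of_isTrackingOn hφ.1 hKm hKtr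
  obtain ⟨htop, hbot⟩ := hKm.tendsto_atTop_atBot_of_add_le he hKstep
  exact ⟨mem_Wstable_of_isTrackingOn hKc hKs hK0 htop fun s _ => hKtr s trivial,
    mem_Wunstable_of_isTrackingOn hKc hKs hK0 hbot fun s _ => hKtr s trivial⟩

theorem exists_eq_of_mem_secImage (hφ : IsRegularFlow φ) (hH : IsCrossSectionField φ H)
    {x z : X} {t : ℝ} (ht : 0 ≤ t) (hz : z ∈ secImage φ H x (Wstable φ H x) t) :
    ∃ y h, MonotoneOn h (Ici 0) ∧ ContinuousOn h (Ici 0) ∧ IsTrackingOn φ H x y h (Ici 0) ∧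
      z = φ (h t) y := by
  obtain ⟨y, ⟨h, hc, hm, h0, -, -, htr⟩, g, hgc, hg0, hgtr, rfl⟩ := hz
  exact ⟨y, h, hm.monotoneOn, hc, htr,
    congrArg (φ · y) (IsTrackingOn.eqOn hφ hH hgc hc hgtr htr (hg0.trans h0.symm) ht)⟩

theorem mem_Wstable_inter_Wunstable_of_tendsto_secImage (hφ : IsRegularFlow φ)
    (hH : IsCrossSectionField φ H) (hmon : IsMonotonousField φ H) {x w z : X} {t : ℕ → ℝ}
    (ht : Tendsto t atTop atTop) (ht0 : ∀ n, 0 ≤ t n) {p : ℕ → X}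
    (hp : ∀ n, p n ∈ secImage φ H x (Wstable φ H x) (t n))
    (hw : Tendsto (fun n => φ (t n) x) atTop (𝓝 w)) (hz : Tendsto p atTop (𝓝 z)) :
    z ∈ Wstable φ H w ∩ Wunstable φ H w := by
  choose y h hm hc htr hpeq using fun n => exists_eq_of_mem_secImage hφ hH (ht0 n) (hp n)
  refine mem_Wstable_inter_Wunstable_of_isTrackingOn hφ hH hmon
    (k := fun n s => h n (max (t n + s) 0) - h n (t n)) (fun n => by simp [max_eq_left (ht0 n)])
    (fun n s s' hss' => sub_le_sub_right (hm n (mem_Ici.2 (le_max_right _ _))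
      (mem_Ici.2 (le_max_right _ _))
      (max_le_max (by linarith) le_rfl)) _)
    (fun n => ((hc n).comp_continuous ((continuous_const_add (t n)).max continuous_const)
      fun s => mem_Ici.2 (le_max_right _ _)).sub continuous_const)
    (fun L => (ht.eventually_ge_atTop L).mono fun n hn s hs => ?_) hw hz
  have hs : 0 ≤ t n + s := by linarith [hs.1]
  dsimp only
  rw [hpeq, ← hφ.1.2.2 _ _ (y n), sub_add_cancel, max_eq_left hs, ← hφ.1.2.2 s, add_comm s]
  exact htr n _ hs

end Limit

end Tracking

theorem stmt12_general {X : Type u} [MetricSpace X] [CompactSpace X] (φ : ℝ → X → X)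
    (hreg : IsRegularFlow φ) (F : CrossSectionFamily φ) (δ : ℝ)
    (hδ : δ ∈ Ioc (0 : ℝ) F.r)
    (hconst : ∀ x : X, Wstable φ (F.H δ) x ∩ Wunstable φ (F.H δ) x = {x}) (x : X) :
    Tendsto (fun t : ℝ => diam (secImage φ (F.H δ) x (Wstable φ (F.H δ) x) t))
      atTop (𝓝 0) := by
  by_contra hlim
  obtain ⟨ε, hε, t, ht, hfar⟩ := exists_dist_lt_of_not_tendsto_diam hlim
  choose p hp q hq hpq using hfar
  obtain ⟨⟨⟨p', q'⟩, w⟩, ψ, hψ, hlim⟩ :=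
    CompactSpace.tendsto_subseq fun n => ((p n, q n), φ (t n) x)
  have htψ : Tendsto (t ∘ ψ) atTop atTop := tendsto_atTop_mono
    (fun n => (Nat.cast_le.2 (hψ.id_le n)).trans (ht (ψ n))) tendsto_natCast_atTop_atTop
  have htψ0 : ∀ n, 0 ≤ t (ψ n) := fun n => (Nat.cast_nonneg _).trans (ht _)
  have hw : Tendsto (fun n => φ (t (ψ n)) x) atTop (𝓝 w) := (continuous_snd.tendsto _).comp hlim
  have hp' : Tendsto (p ∘ ψ) atTop (𝓝 p') :=
    ((continuous_fst.comp continuous_fst).tendsto _).comp hlim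
  have hq' : Tendsto (q ∘ ψ) atTop (𝓝 q') :=
    ((continuous_snd.comp continuous_fst).tendsto _).comp hlim
  have hp'w := mem_Wstable_inter_Wunstable_of_tendsto_secImage hreg (F.cross δ hδ)
    (F.monot δ hδ) htψ htψ0 (fun n => hp (ψ n)) hw hp'
  have hq'w := mem_Wstable_inter_Wunstable_of_tendsto_secImage hreg (F.cross δ hδ)
    (F.monot δ hδ) htψ htψ0 (fun n => hq (ψ n)) hw hq'
  rw [hconst w, mem_singleton_iff] at hp'w hq'w
  have := ge_of_tendsto (hp'.dist hq') (Eventually.of_forall fun n => (hpq (ψ n)).le)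
  rw [hp'w, hq'w, dist_self] at this
  linarith

/-- For a regular expansive flow with expansive constant `δ`, the diameter of
`Φ_t(x, W^s_δ(x))` tends to `0` as `t → +∞`. -/
theorem stmt12 {X : Type u} [MetricSpace X] [CompactSpace X] [ConnectedSpace X]
    [LocallyConnectedSpace X] (φ : ℝ → X → X) (hreg : IsRegularFlow φ)
    (hexp : IsExpansiveFlow φ) (F : CrossSectionFamily φ) (δ : ℝ)
    (hδ : δ ∈ Ioc (0 : ℝ) F.r)
    (hconst : ∀ x : X, Wstable φ (F.H δ) x ∩ Wunstable φ (F.H δ) x = {x}) (x : X) :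
    Tendsto (fun t : ℝ => diam (secImage φ (F.H δ) x (Wstable φ (F.H δ) x) t))
      atTop (𝓝 0) :=
  stmt12_general φ hreg F δ hδ hconst x
end

section
/- Let φ be a regular flow on a compact metric space X. If N is a field of neighborhoods and H is a field of cross sections, then the field N ∩ H defined by (N ∩ H)(x) = N(x) ∩ H(x) is a field of cross sections. -/
open Set Metric Filter Topology

universe u

/-! In a compact space a field of compact sets is the same thing as a reflexive relation
with closed graph. Closed graphs are stable under intersection and, being images of compact
sets, under flow saturation; this gives everything except the uniform neighborhood property
of `φ_{[-τ,τ]}(N ∩ H)`. For that, note that a point `y ∈ H a` with `φ t y = a`, `|t| ≤ τ`,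
is `a` itself; by compactness, `φ t y` close to `a` forces `y` close to `a`, hence
`y ∈ N a`. -/

section Fields

variable {X : Type u} [MetricSpace X]

def fieldGraph (h : X → Set X) : Set (X × X) := {p | p.2 ∈ h p.1}

lemma mem_ballSet_iff {r : ℝ} {K : Set X} {z : X} :
    z ∈ ballSet r K ↔ ∃ w ∈ K, dist z w ≤ r := by
  simp [ballSet, mem_iUnion, Metric.mem_closedBall]

lemma IsFieldOfCompactSets.isClosed_fieldGraph {h : X → Set X} (hh : IsFieldOfCompactSets h) :
    IsClosed (fieldGraph h) := by
  obtain ⟨hcomp, hmem, hsemi⟩ := hh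
  refine isOpen_compl_iff.1 (Metric.isOpen_iff.2 fun ⟨x, z⟩ hz => ?_)
  have hd : 0 < infDist z (h x) :=
    ((hcomp x).isClosed.notMem_iff_infDist_pos ⟨x, hmem x⟩).1 hz
  obtain ⟨δ, hδ, hδsub⟩ := hsemi x _ (half_pos hd)
  refine ⟨min δ (infDist z (h x) / 2), lt_min hδ (half_pos hd), fun ⟨y, w⟩ hyw hw => ?_⟩
  rw [mem_ball, Prod.dist_eq, max_lt_iff, lt_min_iff, lt_min_iff] at hyw
  obtain ⟨v, hv, hwv⟩ := mem_ballSet_iff.1 (hδsub y (by rw [dist_comm]; exact hyw.1.1) hw)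
  linarith [infDist_le_dist_of_mem (x := z) hv, dist_triangle z w v, dist_comm z w, hyw.2.2]

lemma semicontinuous_of_isClosed_fieldGraph [CompactSpace X] {h : X → Set X}
    (hg : IsClosed (fieldGraph h)) (x : X) {ε : ℝ} (hε : 0 < ε) :
    ∃ δ > 0, ∀ y, dist x y < δ → h y ⊆ ballSet ε (h x) := by
  set K := fieldGraph h ∩ univ ×ˢ (thickening ε (h x))ᶜ
  have hK : IsCompact K :=
    (hg.inter (isClosed_univ.prod isOpen_thickening.isClosed_compl)).isCompact
  have hpos : ∀ p ∈ K, 0 < dist x p.1 := by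
    rintro ⟨y, w⟩ ⟨hw, -, hthick⟩
    refine dist_pos.2 fun hxy => hthick ?_
    subst hxy
    exact self_subset_thickening hε _ hw
  obtain ⟨δ, hδ, hδK⟩ := hK.exists_forall_le' (by fun_prop) hpos
  refine ⟨δ, hδ, fun y hy w hw => ?_⟩
  have hthick : w ∈ thickening ε (h x) := by
    by_contra hw'
    exact (hδK (y, w) ⟨hw, mem_univ y, hw'⟩).not_gt hy
  obtain ⟨v, hv, hwv⟩ := mem_thickening_iff.1 hthick
  exact mem_ballSet_iff.2 ⟨v, hv, hwv.le⟩

lemma isFieldOfCompactSets_iff [CompactSpace X] {h : X → Set X} :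
    IsFieldOfCompactSets h ↔ (∀ x, x ∈ h x) ∧ IsClosed (fieldGraph h) :=
  ⟨fun hh => ⟨hh.2.1, hh.isClosed_fieldGraph⟩, fun ⟨hmem, hg⟩ =>
    ⟨fun x => (hg.preimage (Continuous.prodMk_right x)).isCompact, hmem,
      fun x _ hε => semicontinuous_of_isClosed_fieldGraph hg x hε⟩⟩

lemma IsFieldOfCompactSets.inter [CompactSpace X] {N H : X → Set X}
    (hN : IsFieldOfCompactSets N) (hH : IsFieldOfCompactSets H) :
    IsFieldOfCompactSets (fun x => N x ∩ H x) :=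
  isFieldOfCompactSets_iff.2
    ⟨fun x => ⟨hN.2.1 x, hH.2.1 x⟩, hN.isClosed_fieldGraph.inter hH.isClosed_fieldGraph⟩

lemma isCompact_flowSatDomain [CompactSpace X] {I : Set ℝ} (hI : IsCompact I) {h : X → Set X}
    (hg : IsClosed (fieldGraph h)) :
    IsCompact {q : X × ℝ × X | q.2.1 ∈ I ∧ q.2.2 ∈ h q.1} := by
  refine (isCompact_univ.prod (hI.prod isCompact_univ)).of_isClosed_subset ?_
    fun q hq => ⟨mem_univ _, hq.1, mem_univ _⟩
  exact (hI.isClosed.preimage (by fun_prop : Continuous fun q : X × ℝ × X => q.2.1)).inter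
    (hg.preimage (by fun_prop : Continuous fun q : X × ℝ × X => (q.1, q.2.2)))

lemma isFieldOfCompactSets_flowSat [CompactSpace X] {φ : ℝ → X → X} (hφ : IsFlow φ)
    {I : Set ℝ} (hI : IsCompact I) (hI0 : (0 : ℝ) ∈ I) {h : X → Set X}
    (hh : IsFieldOfCompactSets h) : IsFieldOfCompactSets (flowSat φ I h) := by
  refine isFieldOfCompactSets_iff.2 ⟨fun x => ⟨0, hI0, x, hh.2.1 x, (hφ.2.1 x).symm⟩, ?_⟩
  set S : Set (X × ℝ × X) := {q | q.2.1 ∈ I ∧ q.2.2 ∈ h q.1}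
  have hS : IsCompact S := isCompact_flowSatDomain hI hh.isClosed_fieldGraph
  have himage : fieldGraph (flowSat φ I h) = (fun q => (q.1, φ q.2.1 q.2.2)) '' S := by
    ext ⟨x, z⟩
    constructor
    · rintro ⟨t, ht, y, hy, rfl⟩
      exact ⟨(x, t, y), ⟨ht, hy⟩, rfl⟩
    · rintro ⟨⟨x, t, y⟩, ⟨ht, hy⟩, hxz⟩
      cases hxz
      exact ⟨t, ht, y, hy, rfl⟩
  have hcont : Continuous fun q : X × ℝ × X => (q.1, φ q.2.1 q.2.2) :=
    continuous_fst.prodMk (hφ.1.comp continuous_snd)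
  rw [himage]
  exact (hS.image hcont).isClosed

lemma exists_closedBall_subset_flowSat_inter [CompactSpace X] {φ : ℝ → X → X}
    (hφ : IsFlow φ) {N H : X → Set X} {r ρ τ : ℝ} (hr : 0 < r)
    (hN : ∀ x, closedBall x r ⊆ N x)
    (hH : IsFieldOfCompactSets H) (hρ : 0 < ρ)
    (hsat : ∀ x, closedBall x ρ ⊆ flowSat φ (Icc (-τ) τ) H x)
    (huniq : ∀ x, ∀ y ∈ H x, H x ∩ {z | ∃ t : ℝ, |t| ≤ τ ∧ z = φ t y} = {y}) :
    ∃ ρ' > 0, ∀ x, closedBall x ρ' ⊆ flowSat φ (Icc (-τ) τ) (fun x => N x ∩ H x) x := by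
  set K : Set (X × ℝ × X) :=
    {q | q.2.1 ∈ Icc (-τ) τ ∧ q.2.2 ∈ H q.1} ∩ {q | r ≤ dist q.1 q.2.2}
  have hK : IsCompact K :=
    (isCompact_flowSatDomain isCompact_Icc hH.isClosed_fieldGraph).inter_right
      (isClosed_le continuous_const (continuous_fst.dist (continuous_snd.comp continuous_snd)))
  have hpos : ∀ q ∈ K, 0 < dist (φ q.2.1 q.2.2) q.1 := by
    rintro ⟨a, t, y⟩ ⟨⟨ht, hy⟩, hay⟩
    refine dist_pos.2 fun hta => ?_
    have hmem : a ∈ H a ∩ {z | ∃ s : ℝ, |s| ≤ τ ∧ z = φ s y} :=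
      ⟨hH.2.1 a, t, abs_le.2 ht, hta.symm⟩
    rw [huniq a y hy, mem_singleton_iff] at hmem
    have hay' : r ≤ dist a y := hay
    rw [hmem, dist_self] at hay'
    linarith
  have hcont : Continuous fun q : X × ℝ × X => dist (φ q.2.1 q.2.2) q.1 :=
    (hφ.1.comp continuous_snd).dist continuous_fst
  obtain ⟨η, hη, hηK⟩ := hK.exists_forall_le' hcont.continuousOn hpos
  refine ⟨min ρ (η / 2), lt_min hρ (half_pos hη), fun a z hz => ?_⟩
  rw [mem_closedBall, le_min_iff] at hz
  obtain ⟨t, ht, y, hy, rfl⟩ := hsat a (mem_closedBall.2 hz.1)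
  have hay : dist a y < r := by
    by_contra hry
    linarith [hηK (a, t, y) ⟨⟨ht, hy⟩, not_lt.1 hry⟩]
  exact ⟨t, ht, y, ⟨hN a (mem_closedBall'.2 hay.le), hy⟩, rfl⟩

end Fields

/-- The intersection of a field of neighborhoods with a field of cross sections is a
field of cross sections. -/
theorem stmt18 {X : Type u} [MetricSpace X] [CompactSpace X] (φ : ℝ → X → X)
    (hφ : IsRegularFlow φ) (N H : X → Set X) (hN : IsFieldOfNbhds N)
    (hH : IsCrossSectionField φ H) :
    IsCrossSectionField φ (fun x => N x ∩ H x) := by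
  obtain ⟨hflow, -⟩ := hφ
  obtain ⟨r, hr, hNball⟩ := hN.2
  obtain ⟨τ, hτ, ⟨-, ρ, hρ, hsat⟩, huniq⟩ := hH.2
  have hfield := hN.1.inter hH.1
  refine ⟨hfield, τ, hτ, ⟨isFieldOfCompactSets_flowSat hflow isCompact_Icc
      ⟨neg_nonpos.2 hτ.le, hτ.le⟩ hfield,
    exists_closedBall_subset_flowSat_inter hflow hr hNball hH.1 hρ hsat huniq⟩,
    fun x y hy => ?_⟩
  rw [inter_assoc, huniq x y hy.2, inter_singleton_of_mem hy.1]
end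

section
/- Let φ be a regular flow on a compact metric space X, let N be a field of neighborhoods, and let ω be a 1-form on U(N) such that the flow derivative ω̇_x(y) exists for all (x,y) ∈ U(N), is continuous on U(N), and vanishes nowhere. Then there is ρ₁ > 0 such that for every ρ ∈ (0,ρ₁) the field H_ρ defined by H_ρ(x) = B_ρ(x) ∩ ker(ω)(x) is a field of cross sections. -/
open Set Metric Filter Topology

universe u

/-!
Along a flow line through a point `z` near `x`, the function `s ↦ ω_x(φ_s z)` has derivative
`ω̇_x(φ_s z)`, which by compactness stays uniformly close to the nonzero number `ω̇_x(z)` for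
`|s| ≤ τ`. Hence this function is strictly monotone on `[-τ, τ]`, so every orbit segment meets
`ker(ω)(x)` at most once, and it does vanish somewhere once `|ω_x(z)|` is small compared with `τ`,
i.e. once `z` is close to `x`; the latter gives the neighborhoods `φ_{[-τ,τ]}(H_ρ)`. The remaining
properties of a field of cross sections follow from the graph of `H_ρ` being closed in `X × X`.
-/

lemma injOn_and_exists_eq_zero_of_le_hasDerivAt {g D : ℝ → ℝ} {τ c : ℝ} (hc : 0 < c)
    (hg : ∀ s ∈ Icc (-τ) τ, HasDerivAt g (D s) s) (hD : ∀ s ∈ Icc (-τ) τ, c ≤ D s) :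
    InjOn g (Icc (-τ) τ) ∧ (|g 0| ≤ c * τ → ∃ t ∈ Icc (-τ) τ, g t = 0) := by
  have hcont : ContinuousOn g (Icc (-τ) τ) := fun s hs ↦
    (hg s hs).continuousAt.continuousWithinAt
  have hderiv : ∀ s ∈ interior (Icc (-τ) τ), deriv g s = D s := fun s hs ↦
    (hg s (interior_subset hs)).deriv
  refine ⟨(strictMonoOn_of_deriv_pos (convex_Icc _ _) hcont fun s hs ↦ ?_).injOn, fun hg0 ↦ ?_⟩
  · rw [hderiv s hs]
    exact hc.trans_le (hD s (interior_subset hs))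
  obtain ⟨hlow, hupp⟩ := abs_le.mp hg0
  have hτ : 0 ≤ τ := nonneg_of_mul_nonneg_right ((abs_nonneg _).trans hg0) hc
  have h0 : (0 : ℝ) ∈ Icc (-τ) τ := ⟨neg_nonpos.mpr hτ, hτ⟩
  have hmvt := (convex_Icc (-τ) τ).mul_sub_le_image_sub_of_le_deriv hcont
    (fun s hs ↦ (hg s (interior_subset hs)).differentiableAt.differentiableWithinAt)
    (fun s hs ↦ (hderiv s hs).symm ▸ hD s (interior_subset hs))
  have hleft := hmvt (-τ) (left_mem_Icc.mpr (by linarith)) 0 h0 (by linarith)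
  have hright := hmvt 0 h0 τ (right_mem_Icc.mpr (by linarith)) hτ
  exact intermediate_value_Icc (by linarith) hcont ⟨by linarith, by linarith⟩

lemma injOn_and_exists_eq_zero_of_hasDerivAt_near {g D : ℝ → ℝ} {τ c : ℝ} (hc : c ≠ 0)
    (hg : ∀ s ∈ Icc (-τ) τ, HasDerivAt g (D s) s)
    (hD : ∀ s ∈ Icc (-τ) τ, |D s - c| < |c| / 2) :
    InjOn g (Icc (-τ) τ) ∧ (|g 0| ≤ |c| / 2 * τ → ∃ t ∈ Icc (-τ) τ, g t = 0) := by
  rcases hc.lt_or_gt with hneg | hpos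
  · obtain ⟨hinj, hzero⟩ := injOn_and_exists_eq_zero_of_le_hasDerivAt (g := -g) (D := -D)
      (by positivity : 0 < |c| / 2) (fun s hs ↦ (hg s hs).neg) fun s hs ↦ by
        have := hD s hs
        rw [abs_of_neg hneg] at this ⊢
        linarith [(abs_lt.mp this).2, show (-D) s = -D s from rfl]
    refine ⟨fun a ha b hb hab ↦ hinj ha hb (by simp [hab]), fun hg0 ↦ ?_⟩
    obtain ⟨t, ht, hgt⟩ := hzero (by simpa using hg0)
    exact ⟨t, ht, neg_eq_zero.mp hgt⟩
  · exact injOn_and_exists_eq_zero_of_le_hasDerivAt (by positivity) hg fun s hs ↦ by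
      have := hD s hs
      rw [abs_of_pos hpos] at this ⊢
      linarith [(abs_lt.mp this).1]

section Fields

variable {X : Type u} [MetricSpace X]

lemma isFieldOfCompactSets_of_isClosed_fieldGraph [CompactSpace X] {h : X → Set X}
    (hG : IsClosed (fieldGraph h)) (hmem : ∀ x, x ∈ h x) : IsFieldOfCompactSets h := by
  refine ⟨fun x ↦ (hG.preimage (Continuous.prodMk_right x)).isCompact, hmem, fun x ε hε ↦ ?_⟩
  -- the base points over which `h` leaves the open `ε`-thickening of `h x` form a closed set
  set S := Prod.fst '' (fieldGraph h ∩ {p | p.2 ∉ thickening ε (h x)})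
  have hS : IsClosed S := ((hG.inter (isOpen_thickening.preimage continuous_snd).isClosed_compl)
    |>.isCompact.image continuous_fst).isClosed
  have hxS : x ∉ S := by
    rintro ⟨p, ⟨hp, hpε⟩, rfl⟩
    exact hpε (self_subset_thickening hε _ hp)
  obtain ⟨δ, hδ, hball⟩ := Metric.isOpen_iff.mp hS.isOpen_compl x hxS
  refine ⟨δ, hδ, fun y hy z hz ↦ ?_⟩
  by_contra hzε
  obtain ⟨w, hw, hzw⟩ : ∃ w ∈ h x, dist z w < ε := by
    by_contra hfar
    exact hball (mem_ball.mpr (by rwa [dist_comm]))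
      ⟨(y, z), ⟨hz, mt mem_thickening_iff.mp hfar⟩, rfl⟩
  exact hzε (mem_biUnion hw (mem_closedBall.mpr hzw.le))

lemma isClosed_fieldGraph_flowSat [CompactSpace X] {φ : ℝ → X → X}
    (hφ : Continuous fun p : ℝ × X ↦ φ p.1 p.2) {I : Set ℝ} (hI : IsCompact I) {h : X → Set X}
    (hG : IsClosed (fieldGraph h)) : IsClosed (fieldGraph (flowSat φ I h)) := by
  have : fieldGraph (flowSat φ I h) =
      (fun q : ℝ × (X × X) ↦ (q.2.1, φ q.1 q.2.2)) '' (I ×ˢ fieldGraph h) := by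
    ext ⟨x, z⟩
    simp only [fieldGraph, flowSat, mem_ofPred_eq, mem_image, mem_prod, Prod.exists, Prod.mk.injEq]
    constructor
    · rintro ⟨t, ht, y, hy, rfl⟩
      exact ⟨t, x, y, ⟨ht, hy⟩, rfl, rfl⟩
    · rintro ⟨t, _, y, ⟨ht, hy⟩, rfl, rfl⟩
      exact ⟨t, ht, y, hy, rfl⟩
  rw [this]
  exact ((hI.prod hG.isCompact).image (by fun_prop)).isClosed

lemma isClosed_fieldGraph_kernel {N : X → Set X} (hN : IsClosed (fieldGraph N)) {ω : X → X → ℝ}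
    (hω : ContinuousOn (fun p : X × X ↦ ω p.1 p.2) (fieldGraph N)) (ρ : ℝ) :
    IsClosed (fieldGraph fun x ↦ closedBall x ρ ∩ {y ∈ N x | ω x y = 0}) := by
  have : (fieldGraph fun x ↦ closedBall x ρ ∩ {y ∈ N x | ω x y = 0}) =
      {p : X × X | dist p.2 p.1 ≤ ρ} ∩ (fieldGraph N ∩ (fun p ↦ ω p.1 p.2) ⁻¹' {0}) := by
    ext
    simp [fieldGraph]
  rw [this]
  exact (isClosed_le (by fun_prop) continuous_const).inter
    (hω.preimage_isClosed_of_isClosed hN isClosed_singleton)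

lemma isCrossSectionField_of_isClosed_fieldGraph [CompactSpace X] {φ : ℝ → X → X}
    (hφ : IsFlow φ) {H : X → Set X} (hG : IsClosed (fieldGraph H)) (hmem : ∀ x, x ∈ H x)
    {τ b : ℝ} (hτ : 0 < τ) (hb : 0 < b)
    (hball : ∀ x, closedBall x b ⊆ flowSat φ (Icc (-τ) τ) H x)
    (huniq : ∀ x, ∀ y ∈ H x, ∀ t ∈ Icc (-τ) τ, φ t y ∈ H x → t = 0) :
    IsCrossSectionField φ H := by
  obtain ⟨hcont, hφ0, -⟩ := hφ
  have h0 : (0 : ℝ) ∈ Icc (-τ) τ := ⟨neg_nonpos.mpr hτ.le, hτ.le⟩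
  have hsat := isClosed_fieldGraph_flowSat hcont (isCompact_Icc (a := -τ) (b := τ)) hG
  refine ⟨isFieldOfCompactSets_of_isClosed_fieldGraph hG hmem, τ, hτ,
    ⟨isFieldOfCompactSets_of_isClosed_fieldGraph hsat fun x ↦ ⟨0, h0, x, hmem x, (hφ0 x).symm⟩,
      b, hb, hball⟩, fun x y hy ↦ ?_⟩
  ext z
  simp only [mem_inter_iff, mem_ofPred_eq, mem_singleton_iff]
  constructor
  · rintro ⟨hz, t, ht, rfl⟩
    rw [huniq x y hy t (abs_le.mp ht) hz, hφ0]
  · rintro rfl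
    exact ⟨hy, 0, by simp [hτ.le], (hφ0 _).symm⟩

end Fields

lemma hasDerivAt_comp_flow {X : Type u} {φ : ℝ → X → X}
    (hadd : ∀ (s t : ℝ) (x : X), φ (s + t) x = φ s (φ t x))
    {f : X → ℝ} {z : X} {s f' : ℝ}
    (hf : Tendsto (fun t ↦ (f (φ t (φ s z)) - f (φ s z)) / t) (𝓝[≠] 0) (𝓝 f')) :
    HasDerivAt (fun u ↦ f (φ u z)) f' s := by
  rw [hasDerivAt_iff_tendsto_slope_zero]
  refine hf.congr fun t ↦ ?_
  rw [add_comm, hadd, smul_eq_mul, inv_mul_eq_div]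

section Flow

variable {X : Type u} [MetricSpace X] {φ : ℝ → X → X}

lemma IsFlow.eventually_forall_Icc_dist_lt [CompactSpace X] (hφ : IsFlow φ) {e : ℝ}
    (he : 0 < e) :
    ∀ᶠ τ in 𝓝[>] 0, ∀ s ∈ Icc (-τ) τ, ∀ z, dist (φ s z) z < e := by
  obtain ⟨τ₀, hτ₀, hclose⟩ := Metric.eventually_nhds_iff.mp
    (Metric.tendstoUniformly_iff.mp (Continuous.tendstoUniformly φ hφ.1 0) e he)
  filter_upwards [Ioo_mem_nhdsGT hτ₀] with τ hτ s hs z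
  have hs' : dist s 0 < τ₀ := by
    rw [Real.dist_eq, sub_zero, abs_lt]
    constructor <;> linarith [hs.1, hs.2, hτ.2]
  have := hclose hs' z
  rwa [hφ.2.1, dist_comm] at this

lemma exists_radius_forall_transverse [CompactSpace X] (hφ : IsFlow φ) {N : X → Set X}
    (hN : IsFieldOfNbhds N) {ω dω : X → X → ℝ}
    (hωcont : ContinuousOn (fun p : X × X ↦ ω p.1 p.2) (fieldGraph N)) (hω0 : ∀ x, ω x x = 0)
    (hder : ∀ x y, y ∈ N x →
      Tendsto (fun t : ℝ ↦ (ω x (φ t y) - ω x y) / t) (𝓝[≠] 0) (𝓝 (dω x y)))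
    (hdcont : ContinuousOn (fun p : X × X ↦ dω p.1 p.2) (fieldGraph N))
    (hdne : ∀ x y, y ∈ N x → dω x y ≠ 0) :
    ∃ r > 0, ∀ᶠ τ in 𝓝[>] 0, ∃ η > 0, ∀ x z, dist x z ≤ r →
      (∀ s ∈ Icc (-τ) τ, φ s z ∈ N x) ∧ InjOn (fun s ↦ ω x (φ s z)) (Icc (-τ) τ) ∧
      (dist x z ≤ η → ∃ t ∈ Icc (-τ) τ, ω x (φ t z) = 0) := by
  obtain ⟨r, hr, hrN⟩ := hN.2
  have hU : IsCompact (fieldGraph N) := hN.1.isClosed_fieldGraph.isCompact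
  obtain ⟨m, hm, hmle⟩ := hU.exists_forall_le' hdcont.abs fun p hp ↦ abs_pos.mpr (hdne _ _ hp)
  obtain ⟨δ, hδ, hdω⟩ := Metric.uniformContinuousOn_iff.mp
    (hU.uniformContinuousOn_of_continuous hdcont) (m / 2) (half_pos hm)
  refine ⟨r / 2, half_pos hr, ?_⟩
  filter_upwards [hφ.eventually_forall_Icc_dist_lt (lt_min (half_pos hr) hδ),
    self_mem_nhdsWithin] with τ hflow (hτ : 0 < τ)
  obtain ⟨η, hη, hω⟩ := Metric.uniformContinuousOn_iff.mp
    (hU.uniformContinuousOn_of_continuous hωcont) (m / 2 * τ) (by positivity)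
  refine ⟨η / 2, half_pos hη, fun x z hxz ↦ ?_⟩
  have hmemN : ∀ s ∈ Icc (-τ) τ, φ s z ∈ N x := fun s hs ↦ hrN x <| mem_closedBall.mpr <| by
    linarith [dist_triangle (φ s z) z x, (hflow s hs z).trans_le (min_le_left _ _), dist_comm x z]
  have hz : z ∈ N x := hrN x (mem_closedBall.mpr (by rw [dist_comm]; linarith))
  have hnear : ∀ s ∈ Icc (-τ) τ, |dω x (φ s z) - dω x z| < |dω x z| / 2 := fun s hs ↦ by
    have := hdω (x, φ s z) (hmemN s hs) (x, z) hz
      (by rw [dist_prod_same_left]; exact (hflow s hs z).trans_le (min_le_right _ _))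
    rw [Real.dist_eq] at this
    linarith [hmle (x, z) hz]
  obtain ⟨hinj, hzero⟩ := injOn_and_exists_eq_zero_of_hasDerivAt_near (hdne x z hz)
    (fun s hs ↦ hasDerivAt_comp_flow hφ.2.2 (hder x _ (hmemN s hs))) hnear
  refine ⟨hmemN, hinj, fun hzη ↦ hzero ?_⟩
  have hsmall := hω (x, z) hz (x, x) (hN.1.2.1 x)
    (by rw [dist_prod_same_left, dist_comm]; linarith)
  rw [Real.dist_eq, hω0, sub_zero] at hsmall
  rw [hφ.2.1]
  exact hsmall.le.trans (mul_le_mul_of_nonneg_right (by linarith [hmle (x, z) hz]) hτ.le)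

end Flow

/-- If `ω` is a 1-form on `U(N)` whose flow derivative exists, is continuous and
vanishes nowhere, then `H_ρ(x) = B_ρ(x) ∩ ker(ω)(x)` is a field of cross sections
for all small `ρ > 0`. -/
theorem stmt19 {X : Type u} [MetricSpace X] [CompactSpace X] (φ : ℝ → X → X)
    (hφ : IsRegularFlow φ) (N : X → Set X) (hN : IsFieldOfNbhds N) (ω : X → X → ℝ)
    (hωcont : ContinuousOn (fun p : X × X => ω p.1 p.2) {p : X × X | p.2 ∈ N p.1})
    (hω0 : ∀ x : X, ω x x = 0) (dω : X → X → ℝ)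
    (hder : ∀ x y : X, y ∈ N x →
      Tendsto (fun t : ℝ => (ω x (φ t y) - ω x y) / t) (𝓝[≠] 0) (𝓝 (dω x y)))
    (hdcont : ContinuousOn (fun p : X × X => dω p.1 p.2) {p : X × X | p.2 ∈ N p.1})
    (hdne : ∀ x y : X, y ∈ N x → dω x y ≠ 0) :
    ∃ ρ₁ > (0 : ℝ), ∀ ρ ∈ Ioo (0 : ℝ) ρ₁,
      IsCrossSectionField φ (fun x => closedBall x ρ ∩ {y ∈ N x | ω x y = 0}) := by
  obtain ⟨r, hr, htransverse⟩ :=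
    exists_radius_forall_transverse hφ.1 hN hωcont hω0 hder hdcont hdne
  refine ⟨r, hr, fun ρ ⟨hρ, hρr⟩ ↦ ?_⟩
  obtain ⟨τ, ⟨⟨η, hη, hbox⟩, hflow⟩, hτ⟩ := ((htransverse.and
    (hφ.1.eventually_forall_Icc_dist_lt (half_pos hρ))).and self_mem_nhdsWithin).exists
  refine isCrossSectionField_of_isClosed_fieldGraph hφ.1
    (isClosed_fieldGraph_kernel hN.1.isClosed_fieldGraph hωcont ρ)
    (fun x ↦ ⟨mem_closedBall_self hρ.le, hN.1.2.1 x, hω0 x⟩) hτ (lt_min (half_pos hρ) hη)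
    (fun x z hz ↦ ?_) ?_
  · have hzx : dist x z ≤ min (ρ / 2) η := by rwa [dist_comm, ← mem_closedBall]
    have hxz : dist x z ≤ ρ / 2 := hzx.trans (min_le_left _ _)
    obtain ⟨hmemN, -, hzero⟩ := hbox x z (by linarith)
    obtain ⟨t, ht, hωt⟩ := hzero (hzx.trans (min_le_right _ _))
    refine ⟨-t, ⟨neg_le_neg ht.2, neg_le.mp ht.1⟩, φ t z,
      ⟨mem_closedBall.mpr ?_, hmemN t ht, hωt⟩, ?_⟩
    · linarith [dist_triangle (φ t z) z x, hflow t ht z, dist_comm x z]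
    · rw [← hφ.1.2.2, neg_add_cancel, hφ.1.2.1]
  · rintro x y ⟨hy, -, hyω⟩ t ht ⟨-, -, htω⟩
    have h0 : (0 : ℝ) ∈ Icc (-τ) τ := ⟨neg_nonpos.mpr hτ.le, hτ.le⟩
    exact (hbox x y (by rw [dist_comm]; linarith [mem_closedBall.mp hy])).2.1 ht h0
      (by simp only [hφ.1.2.1, htω, hyω])
end
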